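/- arXiv:math/0505508 — 13 statements merged into one kernel-verified Lean document; each statement's English description precedes it below -/
import Mathlib

section
/- The completion of a finitely injective metric space is finitely injective. -/
open UniformSpace Filter Topology

/-- A metric space is finitely injective if every Katetov map on a finite subset is
realized by a point. -/
def FinitelyInjective (X : Type*) [MetricSpace X] : Prop :=
  ∀ (n : ℕ) (x : Fin n → X) (f : Fin n → ℝ),
    (∀ i j, |f i - f j| ≤ dist (x i) (x j) ∧ dist (x i) (x j) ≤ f i + f j) →
    ∃ z : X, ∀ i, dist z (x i) = f i

/-- The completion of a finitely injective metric space is finitely injective. -/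
theorem completion_finitelyInjective (X : Type*) [MetricSpace X]
    (hX : FinitelyInjective X) : FinitelyInjective (UniformSpace.Completion X) := by
  intro n x f hf
  rcases Nat.eq_zero_or_pos n with hn | hn
  · subst hn
    obtain ⟨z, -⟩ := hX 0 (fun i => i.elim0) (fun i => i.elim0) (fun i => i.elim0)
    exact ⟨(z : Completion X), fun i => i.elim0⟩
  haveI : Nonempty (Fin n) := Fin.pos_iff_nonempty.mp hn
  have hf0 : ∀ i, 0 ≤ f i := by
    intro i
    have h := (hf i i).2
    simp only [dist_self] at h
    linarith
  -- The Katetov extension of `f` to the whole completion.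
  obtain ⟨F, hF_x, hF_lip, hF_kat, hF_nonneg⟩ :
      ∃ F : Completion X → ℝ, (∀ i, F (x i) = f i) ∧ (∀ p q, |F p - F q| ≤ dist p q) ∧
        (∀ p q, dist p q ≤ F p + F q) ∧ (∀ p, 0 ≤ F p) := by
    refine ⟨fun p => ⨅ i, (f i + dist p (x i)), ?_, ?_, ?_, ?_⟩
    all_goals
      have hbdd : ∀ p : Completion X, BddBelow (Set.range fun i => f i + dist p (x i)) := by
        intro p
        refine ⟨0, ?_⟩
        rintro _ ⟨i, rfl⟩
        exact add_nonneg (hf0 i) dist_nonneg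
      have hle : ∀ (p : Completion X) (i), (⨅ j, (f j + dist p (x j))) ≤ f i + dist p (x i) :=
        fun p i => ciInf_le (hbdd p) i
      have hge : ∀ (p : Completion X) (c : ℝ), (∀ i, c ≤ f i + dist p (x i)) →
          c ≤ ⨅ j, (f j + dist p (x j)) := fun p c h => le_ciInf h
      have hlip1 : ∀ p q : Completion X,
          (⨅ j, (f j + dist p (x j))) ≤ (⨅ j, (f j + dist q (x j))) + dist p q := by
        intro p q
        rw [← sub_le_iff_le_add]
        refine hge q _ fun i => ?_
        have h1 := hle p i
        have h2 := dist_triangle p q (x i)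
        linarith
    · intro i
      apply le_antisymm
      · have := hle (x i) i
        simpa using this
      · refine hge (x i) _ fun j => ?_
        have h1 := (abs_le.mp (hf i j).1).2
        linarith [dist_nonneg (x := x i) (y := x j)]
    · intro p q
      rw [abs_sub_le_iff]
      refine ⟨by linarith [hlip1 p q], ?_⟩
      have := hlip1 q p
      rw [dist_comm] at this
      linarith
    · intro p q
      rw [← sub_le_iff_le_add]
      refine hge p _ fun i => ?_
      rw [sub_le_iff_le_add, add_comm, ← sub_le_iff_le_add]
      refine hge q _ fun j => ?_
      have h1 := (hf i j).2
      have h2 := dist_triangle p (x i) (x j)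
      have h3 := dist_triangle p (x j) q
      have h4 := dist_comm q (x j)
      linarith [dist_triangle p (x i) q, dist_triangle (x i) (x j) q,
        dist_comm (x j) q, dist_triangle p (x i) (x j)]
    · intro p
      exact hge p 0 fun i => add_nonneg (hf0 i) dist_nonneg
  -- choose approximating points in `X`
  have hy' : ∀ (k : ℕ) (i : Fin n), ∃ p : X, dist (↑p : Completion X) (x i) < (1/2) ^ k := by
    intro k i
    obtain ⟨p, hp⟩ := Metric.denseRange_iff.mp (Completion.denseRange_coe (α := X)) (x i)
      ((1/2) ^ k) (by positivity)
    exact ⟨p, by rwa [dist_comm]⟩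
  choose y hy using hy'
  have hFin : (Finset.univ : Finset (Fin n)).Nonempty := Finset.univ_nonempty
  set r : ℕ → X → ℝ := fun k p =>
    Finset.univ.sup' hFin fun i => |dist (↑p : Completion X) ↑(y k i) - F ↑(y k i)| with hrdef
  have hr_mem : ∀ (k : ℕ) (p : X) (i : Fin n),
      |dist (↑p : Completion X) ↑(y k i) - F ↑(y k i)| ≤ r k p := by
    intro k p i
    exact Finset.le_sup' (fun j => |dist (↑p : Completion X) ↑(y k j) - F ↑(y k j)|)
      (Finset.mem_univ i)
  have hr_le : ∀ (k : ℕ) (p : X), r k p ≤ F ↑p := by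
    intro k p
    refine Finset.sup'_le _ _ fun i _ => ?_
    rw [abs_sub_le_iff]
    constructor
    · have := hF_kat (↑p : Completion X) ↑(y k i)
      linarith
    · have h2 := (abs_le.mp (hF_lip (↑(y k i) : Completion X) ↑p)).2
      have c := dist_comm (↑(y k i) : Completion X) ↑p
      linarith
  have hr_nonneg : ∀ (k : ℕ) (p : X), 0 ≤ r k p := fun k p =>
    le_trans (abs_nonneg _) (hr_mem k p (Classical.arbitrary (Fin n)))
  have fact2 : ∀ (k : ℕ) (p : X) (i : Fin n),
      |F ↑(y k i) - r k p| ≤ dist (↑(y k i) : Completion X) ↑p ∧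
      dist (↑(y k i) : Completion X) ↑p ≤ F ↑(y k i) + r k p := by
    intro k p i
    obtain ⟨h1a, h1b⟩ := abs_le.mp (hr_mem k p i)
    have h2 := hr_le k p
    obtain ⟨h3a, h3b⟩ := abs_le.mp (hF_lip (↑p : Completion X) ↑(y k i))
    have c : dist (↑(y k i) : Completion X) ↑p = dist (↑p : Completion X) ↑(y k i) :=
      dist_comm _ _
    constructor
    · rw [abs_le]
      constructor <;> linarith
    · linarith
  -- the step function: realize F on the approximating points together with a previous point
  have hstep : ∀ (k : ℕ) (p : X), ∃ q : X,
      (∀ i, dist (↑q : Completion X) ↑(y k i) = F ↑(y k i)) ∧ dist q p = r k p := by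
    intro k p
    have hkat : ∀ i j : Fin (n + 1),
        |(Fin.snoc (fun i => F ↑(y k i)) (r k p) : Fin (n + 1) → ℝ) i -
            (Fin.snoc (fun i => F ↑(y k i)) (r k p) : Fin (n + 1) → ℝ) j| ≤
          dist ((Fin.snoc (y k) p : Fin (n + 1) → X) i) ((Fin.snoc (y k) p : Fin (n + 1) → X) j) ∧
        dist ((Fin.snoc (y k) p : Fin (n + 1) → X) i) ((Fin.snoc (y k) p : Fin (n + 1) → X) j) ≤
          (Fin.snoc (fun i => F ↑(y k i)) (r k p) : Fin (n + 1) → ℝ) i +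
            (Fin.snoc (fun i => F ↑(y k i)) (r k p) : Fin (n + 1) → ℝ) j := by
      intro i j
      induction i using Fin.lastCases with
      | last =>
        induction j using Fin.lastCases with
        | last =>
          simp only [Fin.snoc_last, sub_self, abs_zero, dist_self]
          exact ⟨le_refl 0, by linarith [hr_nonneg k p]⟩
        | cast j =>
          simp only [Fin.snoc_last, Fin.snoc_castSucc]
          obtain ⟨a, b⟩ := fact2 k p j
          rw [← Completion.dist_eq, dist_comm]
          refine ⟨by rw [abs_sub_comm]; exact a, by linarith⟩
      | cast i =>
        induction j using Fin.lastCases with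
        | last =>
          simp only [Fin.snoc_last, Fin.snoc_castSucc]
          rw [← Completion.dist_eq]
          exact fact2 k p i
        | cast j =>
          simp only [Fin.snoc_castSucc]
          rw [← Completion.dist_eq]
          exact ⟨hF_lip _ _, hF_kat _ _⟩
    obtain ⟨q, hq⟩ := hX (n + 1) (Fin.snoc (y k) p)
      (Fin.snoc (fun i => F ↑(y k i)) (r k p)) hkat
    refine ⟨q, fun i => ?_, ?_⟩
    · have := hq (Fin.castSucc i)
      simp only [Fin.snoc_castSucc] at this
      rw [Completion.dist_eq]
      exact this
    · have := hq (Fin.last n)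
      simpa only [Fin.snoc_last] using this
  choose step hstep1 hstep2 using hstep
  -- the Cauchy sequence
  set z : ℕ → X := fun k =>
    Nat.rec (step 0 (y 0 (Classical.arbitrary (Fin n)))) (fun k zk => step (k + 1) zk) k
    with hzdef
  have hz1 : ∀ (k : ℕ) (i : Fin n), dist (↑(z k) : Completion X) ↑(y k i) = F ↑(y k i) := by
    intro k i
    cases k with
    | zero => exact hstep1 0 _ i
    | succ m => exact hstep1 (m + 1) (z m) i
  have hz2 : ∀ k : ℕ, dist (z (k + 1)) (z k) = r (k + 1) (z k) := fun k =>
    hstep2 (k + 1) (z k)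
  have hyy : ∀ (k : ℕ) (i : Fin n),
      dist (↑(y (k + 1) i) : Completion X) ↑(y k i) ≤ (1/2) ^ (k + 1) + (1/2) ^ k := by
    intro k i
    calc dist (↑(y (k + 1) i) : Completion X) ↑(y k i)
        ≤ dist (↑(y (k + 1) i) : Completion X) (x i) + dist (x i) (↑(y k i) : Completion X) :=
          dist_triangle _ _ _
      _ ≤ (1/2) ^ (k + 1) + (1/2) ^ k := by
          refine add_le_add (hy (k + 1) i).le ?_
          rw [dist_comm]
          exact (hy k i).le
  have hrb : ∀ k : ℕ, r (k + 1) (z k) ≤ 3 * (1/2) ^ k := by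
    intro k
    refine Finset.sup'_le _ _ fun i _ => ?_
    have e1 : dist (↑(z k) : Completion X) ↑(y k i) = F ↑(y k i) := hz1 k i
    have e2 := abs_dist_sub_le (↑(y (k + 1) i) : Completion X) ↑(y k i)
      (↑(z k) : Completion X)
    have e2' := abs_le.mp e2
    have e3 := abs_le.mp (hF_lip (↑(y (k + 1) i) : Completion X) ↑(y k i))
    have e4 := hyy k i
    have c1 : dist (↑(y (k + 1) i) : Completion X) ↑(z k)
        = dist (↑(z k) : Completion X) ↑(y (k + 1) i) := dist_comm _ _
    have c2 : dist (↑(y k i) : Completion X) ↑(z k)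
        = dist (↑(z k) : Completion X) ↑(y k i) := dist_comm _ _
    have hp : (1/2 : ℝ) ^ (k + 1) = (1/2) * (1/2) ^ k := by ring
    rw [abs_le]
    constructor <;> linarith
  have hcau : CauchySeq fun k => (↑(z k) : Completion X) := by
    refine cauchySeq_of_le_geometric (1/2 : ℝ) 3 (by norm_num) fun k => ?_
    rw [Completion.dist_eq, dist_comm, hz2 k]
    exact hrb k
  obtain ⟨w, hw⟩ := cauchySeq_tendsto_of_complete hcau
  refine ⟨w, fun i => ?_⟩
  have h1 : Tendsto (fun k => dist (↑(z k) : Completion X) (x i)) atTop (𝓝 (dist w (x i))) :=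
    hw.dist tendsto_const_nhds
  have h2 : Tendsto (fun k => dist (↑(z k) : Completion X) (x i)) atTop (𝓝 (f i)) := by
    have hb : ∀ k : ℕ, |dist (↑(z k) : Completion X) (x i) - f i| ≤ 2 * (1/2) ^ k := by
      intro k
      have e1 := hz1 k i
      have e2 := abs_le.mp (abs_dist_sub_le (↑(y k i) : Completion X) (x i)
        (↑(z k) : Completion X))
      have e3 := abs_le.mp (hF_lip (↑(y k i) : Completion X) (x i))
      rw [hF_x i] at e3
      have e4 := (hy k i).le
      have c1 : dist (↑(y k i) : Completion X) ↑(z k)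
          = dist (↑(z k) : Completion X) ↑(y k i) := dist_comm _ _
      have c2 : dist (x i) (↑(z k) : Completion X)
          = dist (↑(z k) : Completion X) (x i) := dist_comm _ _
      rw [abs_le]
      constructor <;> linarith
    have hlim : Tendsto (fun k : ℕ => (2 : ℝ) * (1/2) ^ k) atTop (𝓝 0) := by
      simpa using (tendsto_pow_atTop_nhds_zero_of_lt_one (by norm_num : (0:ℝ) ≤ 1/2)
        (by norm_num)).const_mul (2 : ℝ)
    rw [← tendsto_sub_nhds_zero_iff]
    exact squeeze_zero_norm hb hlim
  exact tendsto_nhds_unique h1 h2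
end

section
/- In a finitely injective metric space U, every nonempty closed ball is a set of uniqueness: if B is a closed ball of positive radius, and x, y ∈ U satisfy d(x,z) = d(y,z) for all z ∈ B, then x = y. -/
/-- In a finitely injective metric space, every closed ball of positive radius is a
set of uniqueness. -/
theorem closedBall_set_of_uniqueness (U : Type*) [MetricSpace U]
    (hU : FinitelyInjective U) (c : U) (r : ℝ) (hr : 0 < r) (x y : U)
    (h : ∀ z ∈ Metric.closedBall c r, dist x z = dist y z) : x = y := by
  have hc : c ∈ Metric.closedBall c r := by
    simp [Metric.mem_closedBall, hr.le]
  have hxy : dist x c = dist y c := h c hc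
  set a := dist x c with ha
  by_cases hax : a ≤ r
  · -- x itself is in the ball
    have hx : x ∈ Metric.closedBall c r := by simpa [Metric.mem_closedBall] using hax
    have := h x hx
    simp only [dist_self] at this
    exact (dist_eq_zero.mp this.symm).symm
  · push_neg at hax
    set d := dist x y with hd
    set m := min d (2 * r) with hm
    have hd0 : 0 ≤ d := dist_nonneg
    have hdt : d ≤ 2 * a := by
      have := dist_triangle x c y
      rw [dist_comm c y] at this
      linarith [this, hxy]
    have hm1 : m ≤ d := min_le_left _ _
    have hm2 : m ≤ 2 * r := min_le_right _ _
    have hm0 : 0 ≤ m := le_min hd0 (by linarith)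
    have hm3 : d - 2 * (a - r) ≤ m := le_min (by linarith) (by linarith)
    have hxc' : dist x c = a := rfl
    have hcx' : dist c x = a := by rw [dist_comm]
    have hyc' : dist y c = a := hxy.symm
    have hcy' : dist c y = a := by rw [dist_comm]; exact hxy.symm
    have hxy' : dist x y = d := rfl
    have hyx' : dist y x = d := by rw [dist_comm]
    obtain ⟨z, hz⟩ := hU 3 ![c, x, y] ![r, a - r, a - r + m] (by
      intro i j
      fin_cases i <;> fin_cases j <;>
        simp [hxc', hcx', hyc', hcy', hxy', hyx', abs_sub_le_iff, abs_of_nonneg hm0] <;>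
        and_intros <;> linarith)
    have hz0 := hz 0
    have hz1 := hz 1
    have hz2 := hz 2
    simp [Matrix.cons_val_zero, Matrix.cons_val_one] at hz0 hz1 hz2
    have hzball : z ∈ Metric.closedBall c r := by
      simp [Metric.mem_closedBall, hz0]
    have := h z hzball
    rw [dist_comm x z, dist_comm y z, hz1, hz2] at this
    have hmz : m = 0 := by linarith
    have hdz : d = 0 := by
      by_contra hd'
      have : 0 < m := lt_min (lt_of_le_of_ne hd0 (Ne.symm hd')) (by linarith)
      linarith
    exact dist_eq_zero.mp hdz
end

section
/- Let U be a finitely injective metric space and B a closed ball of positive radius in U. If φ : U → U is an isometric map (distance-preserving) that restricts to the identity on B, then φ is the identity on U. -/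
/-- Key step: if an isometric map is the identity on a closed ball of radius `R > 0`,
then it fixes every point at distance at most `2 * R` from the center. -/
lemma key_double {U : Type*} [MetricSpace U]
    (hU : FinitelyInjective U) (c : U) (R : ℝ) (hR : 0 < R) (φ : U → U)
    (hφ : Isometry φ) (hid : ∀ z ∈ Metric.closedBall c R, φ z = z)
    (x : U) (hx : dist c x ≤ 2 * R) : φ x = x := by
  by_cases hxb : dist c x ≤ R
  · exact hid x (by rwa [Metric.mem_closedBall, dist_comm])
  push_neg at hxb
  have hφc : φ c = c := hid c (Metric.mem_closedBall_self hR.le)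
  have hcφ : dist c (φ x) = dist c x := by
    conv_lhs => rw [← hφc, hφ.dist_eq]
  set b := dist c x with hb
  set a := dist x (φ x) with ha
  clear_value b a
  have ha0 : 0 ≤ a := ha ▸ dist_nonneg
  -- Step 1: a point z on the sphere of radius R "towards" x.
  obtain ⟨z, hz⟩ := hU 2 ![c, x] ![R, b - R] (by
    intro i j
    fin_cases i <;> fin_cases j <;>
      simp [abs_sub_le_iff, abs_of_nonneg ha0, dist_comm, ← hb] <;>
      ((repeat' constructor) <;> linarith))
  have hzc : dist z c = R := by simpa using hz 0
  have hzx : dist z x = b - R := by simpa using hz 1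
  have hφz : φ z = z := hid z (by simpa [Metric.mem_closedBall] using hzc.le)
  have hzφx : dist z (φ x) = b - R := by
    rw [← hφz, hφ.dist_eq]; exact hzx
  have haub : a ≤ 2 * (b - R) := by
    calc a = dist x (φ x) := ha
    _ ≤ dist x z + dist z (φ x) := dist_triangle _ _ _
    _ = 2 * (b - R) := by rw [dist_comm x z, hzx, hzφx]; ring
  -- Step 2: a point w on the sphere of radius R with asymmetric distances to x, φ x.
  obtain ⟨w, hw⟩ := hU 3 ![c, x, φ x] ![R, b - R, b - R + a] (by
    intro i j
    fin_cases i <;> fin_cases j <;>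
      simp [abs_sub_le_iff, abs_of_nonneg ha0, dist_comm, ← hb, ← ha, hcφ] <;>
      ((repeat' constructor) <;> linarith))
  have hwc : dist w c = R := by simpa using hw 0
  have hwx : dist w x = b - R := by simpa using hw 1
  have hwφx : dist w (φ x) = b - R + a := by simpa using hw 2
  have hφw : φ w = w := hid w (by simpa [Metric.mem_closedBall] using hwc.le)
  have heq : dist w (φ x) = dist w x := by
    calc dist w (φ x) = dist (φ w) (φ x) := by rw [hφw]
    _ = dist w x := hφ.dist_eq w x
  have ha0' : a = 0 := by rw [hwφx, hwx] at heq; linarith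
  have hd : dist x (φ x) = 0 := by rw [← ha]; exact ha0'
  exact (dist_eq_zero.mp hd).symm

/-- In a finitely injective metric space, an isometric map which is the identity on a
closed ball of positive radius is the identity. -/
theorem isometric_map_id_on_ball (U : Type*) [MetricSpace U]
    (hU : FinitelyInjective U) (c : U) (r : ℝ) (hr : 0 < r) (φ : U → U)
    (hφ : Isometry φ) (hid : ∀ z ∈ Metric.closedBall c r, φ z = z) :
    ∀ x : U, φ x = x := by
  have main : ∀ n : ℕ, ∀ x : U, dist c x ≤ 2 ^ n * r → φ x = x := by
    intro n
    induction n with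
    | zero => intro x hx; exact hid x (by rw [Metric.mem_closedBall, dist_comm]; simpa using hx)
    | succ n ih =>
      intro x hx
      refine key_double hU c (2 ^ n * r) (by positivity) φ hφ ?_ x (by
        rw [pow_succ] at hx; linarith)
      intro z hz
      exact ih z (by rw [Metric.mem_closedBall, dist_comm] at hz; exact hz)
  intro x
  obtain ⟨n, hn⟩ := pow_unbounded_of_one_lt (dist c x / r) (by norm_num : (1:ℝ) < 2)
  exact main n x (by rw [div_lt_iff₀ hr] at hn; linarith)
end

section
/- Let U be a finitely injective metric space, and let a, b ∈ U with a ≠ b. Then the set Med(a,b) ∪ {a}, where Med(a,b) = { z ∈ U : d(z,a) = d(z,b) }, is a set of uniqueness: if x, y ∈ U have equal distances to every point of Med(a,b) ∪ {a}, then x = y. -/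
lemma realize4 {U : Type*} [MetricSpace U] (hU : FinitelyInjective U)
    (a b x y : U) (f0 f1 f2 f3 : ℝ)
    (hK : ∀ i j : Fin 4, |![f0,f1,f2,f3] i - ![f0,f1,f2,f3] j| ≤ dist (![a,b,x,y] i) (![a,b,x,y] j) ∧
      dist (![a,b,x,y] i) (![a,b,x,y] j) ≤ ![f0,f1,f2,f3] i + ![f0,f1,f2,f3] j) :
    ∃ z : U, dist z a = f0 ∧ dist z b = f1 ∧ dist z x = f2 ∧ dist z y = f3 := by
  obtain ⟨z, hz⟩ := hU 4 ![a,b,x,y] ![f0,f1,f2,f3] hK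
  exact ⟨z, hz 0, hz 1, hz 2, hz 3⟩


/-- In a finitely injective metric space, `Med(a,b) ∪ {a}` is a set of uniqueness. -/
theorem med_union_singleton_uniqueness (U : Type*) [MetricSpace U]
    (hU : FinitelyInjective U) (a b : U) (hab : a ≠ b) (x y : U)
    (h : ∀ z ∈ ({z : U | dist z a = dist z b} ∪ {a} : Set U), dist x z = dist y z) :
    x = y := by
  by_contra hxy
  have hya : dist x a = dist y a := h a (Or.inr rfl)
  have hD : (0:ℝ) < dist x y := dist_pos.mpr hxy
  have hα : (0:ℝ) < dist x a := by
    rcases eq_or_lt_of_le (dist_nonneg (x := x) (y := a)) with he | h'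
    · exfalso; apply hxy
      have hx : x = a := dist_eq_zero.mp he.symm
      have hy : y = a := dist_eq_zero.mp (hya ▸ he.symm)
      rw [hx, hy]
    · exact h'
  have hβnn : (0:ℝ) ≤ dist x b := dist_nonneg
  have hγnn : (0:ℝ) ≤ dist y b := dist_nonneg
  have henn : (0:ℝ) ≤ dist a b := dist_nonneg
  have c1 : dist a x = dist x a := dist_comm a x
  have c2 : dist a y = dist y a := dist_comm a y
  have c3 : dist b x = dist x b := dist_comm b x
  have c4 : dist b y = dist y b := dist_comm b y
  have c5 : dist y x = dist x y := dist_comm y x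
  have c6 : dist b a = dist a b := dist_comm b a
  set m : ℝ := dist x a + dist x b + dist y b + dist x y + dist a b with hm
  rcases eq_or_lt_of_le hβnn with hβ | hβ
  · -- x = b case
    have hxb : x = b := dist_eq_zero.mp hβ.symm
    have hγD : dist y b = dist x y := by rw [← hxb, dist_comm y x]
    set ε : ℝ := min (dist x a) (dist x y) / 2 with hε
    have hmin : 0 < min (dist x a) (dist x y) := lt_min hα hD
    have hε1 : ε ≤ dist x a := by
      have := min_le_left (dist x a) (dist x y); rw [hε]; linarith
    have hε2 : ε ≤ dist x y := by
      have := min_le_right (dist x a) (dist x y); rw [hε]; linarith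
    have hεpos : 0 < ε := by rw [hε]; linarith
    obtain ⟨z, hz0, hz1, hz2, hz3⟩ := realize4 hU a b x y m m m (m - ε) (by
      intro i j
      fin_cases i <;> fin_cases j <;>
        simp [dist_self] <;>
        first
          | refine ⟨abs_le.mpr ⟨by linarith, by linarith⟩, by linarith⟩
          | constructor <;> linarith
          | linarith)
    have hmed : z ∈ ({z : U | dist z a = dist z b} ∪ {a} : Set U) := Or.inl (by
      simp only [Set.mem_setOf_eq]; rw [hz0, hz1])
    have := h z hmed
    rw [dist_comm x z, dist_comm y z, hz2, hz3] at this
    linarith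
  · -- dist x b > 0
    set ε : ℝ := min (dist x a) (min (dist x b) (dist x y)) / 2 with hε
    have hmin : 0 < min (dist x a) (min (dist x b) (dist x y)) := lt_min hα (lt_min hβ hD)
    have hε1 : ε ≤ dist x a := by
      have := min_le_left (dist x a) (min (dist x b) (dist x y)); rw [hε]; linarith
    have hε2 : ε ≤ dist x b := by
      have h1 := min_le_right (dist x a) (min (dist x b) (dist x y))
      have h2 := min_le_left (dist x b) (dist x y); rw [hε]; linarith
    have hε3 : ε ≤ dist x y := by
      have h1 := min_le_right (dist x a) (min (dist x b) (dist x y))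
      have h2 := min_le_right (dist x b) (dist x y); rw [hε]; linarith
    have hεpos : 0 < ε := by rw [hε]; linarith
    obtain ⟨z, hz0, hz1, hz2, hz3⟩ := realize4 hU a b x y m m (m - ε) m (by
      intro i j
      fin_cases i <;> fin_cases j <;>
        simp [dist_self] <;>
        first
          | refine ⟨abs_le.mpr ⟨by linarith, by linarith⟩, by linarith⟩
          | constructor <;> linarith
          | linarith)
    have hmed : z ∈ ({z : U | dist z a = dist z b} ∪ {a} : Set U) := Or.inl (by
      simp only [Set.mem_setOf_eq]; rw [hz0, hz1])
    have := h z hmed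
    rw [dist_comm x z, dist_comm y z, hz2, hz3] at this
    linarith
end

section
/- Let U be a complete, separable, nonempty, finitely injective metric space (the Urysohn space), let X ⊆ U be a closed subset that is proper (closed bounded subsets of X are compact), and let M > 0. Then the set Y = { z ∈ U : d(z,x) ≥ M for all x ∈ X } is finitely injective; consequently Y is isometric to U. -/
open Filter Topology Metric

lemma FinitelyInjective.fintype {X : Type*} [MetricSpace X] (hX : FinitelyInjective X)
    {ι : Type*} [Fintype ι] (x : ι → X) (f : ι → ℝ)
    (h : ∀ i j, |f i - f j| ≤ dist (x i) (x j) ∧ dist (x i) (x j) ≤ f i + f j) :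
    ∃ z : X, ∀ i, dist z (x i) = f i := by
  classical
  obtain ⟨e⟩ : Nonempty (ι ≃ Fin (Fintype.card ι)) := ⟨Fintype.equivFin ι⟩
  obtain ⟨z, hz⟩ := hX (Fintype.card ι) (x ∘ e.symm) (f ∘ e.symm)
    (fun i j => h (e.symm i) (e.symm j))
  refine ⟨z, fun i => ?_⟩
  simpa using hz (e i)

lemma abs_dist_sub_le' {α : Type*} [PseudoMetricSpace α] (c u v : α) :
    |dist c u - dist c v| ≤ dist u v := by
  rw [dist_comm c u, dist_comm c v]; exact abs_dist_sub_le u v c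

lemma dep_choice {α : Type*} (G : ℕ → α → Prop) (d : ℕ → α → α → Prop)
    (h0 : ∃ w, G 0 w) (hs : ∀ k w, G k w → ∃ w', G (k + 1) w' ∧ d k w w') :
    ∃ z : ℕ → α, (∀ k, G k (z k)) ∧ ∀ k, d k (z k) (z (k + 1)) :=
  let Z : ∀ k : ℕ, {w // G k w} := fun k =>
    Nat.rec ⟨h0.choose, h0.choose_spec⟩
      (fun k ih => ⟨(hs k ih.1 ih.2).choose, (hs k ih.1 ih.2).choose_spec.1⟩) k
  ⟨fun k => (Z k).1, fun k => (Z k).2, fun k => (hs k (Z k).1 (Z k).2).choose_spec.2⟩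

lemma key_lemma {U : Type*} [MetricSpace U] [CompleteSpace U] (hU : FinitelyInjective U)
    (X : Set U) (hX : IsClosed X)
    (hprop : ∀ K ⊆ X, IsClosed K → Bornology.IsBounded K → IsCompact K)
    (M : ℝ) (hM : 0 < M) (m : ℕ) (a : Fin (m + 1) → U) (f : Fin (m + 1) → ℝ)
    (hf : ∀ i j, |f i - f j| ≤ dist (a i) (a j) ∧ dist (a i) (a j) ≤ f i + f j)
    (g : U → ℝ)
    (hg1 : ∀ u w, |g u - g w| ≤ dist u w)
    (hg2 : ∀ u w, dist u w ≤ g u + g w)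
    (hga : ∀ i, g (a i) = f i)
    (hgX : ∀ x ∈ X, M ≤ g x) :
    ∃ z : U, (∀ i, dist z (a i) = f i) ∧ ∀ x ∈ X, M ≤ dist z x := by
  classical
  have hfnn : ∀ i, 0 ≤ f i := by
    intro i
    have := (hf i i).2
    simp only [dist_self] at this
    linarith
  by_cases hzero : ∃ i, f i = 0
  · obtain ⟨i, hi⟩ := hzero
    refine ⟨a i, fun j => ?_, fun x hx => ?_⟩
    · have h1 := (hf i j).1
      have h2 := (hf i j).2
      rw [hi] at h1 h2
      have : |(0 : ℝ) - f j| = f j := by rw [abs_sub_comm]; simpa using abs_of_nonneg (hfnn j)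
      rw [this] at h1
      linarith
    · have := hg1 x (a i)
      rw [hga i, hi] at this
      have h2 : g x ≤ dist x (a i) := by
        cases abs_le.mp this; linarith
      rw [dist_comm]
      exact le_trans (hgX x hx) h2
  · push_neg at hzero
    have hfpos : ∀ i, 0 < f i := fun i => lt_of_le_of_ne (hfnn i) (Ne.symm (hzero i))
    set ρ : ℝ := min M (Finset.univ.inf' Finset.univ_nonempty f) with hρ_def
    have hρpos : 0 < ρ := by
      apply lt_min hM
      obtain ⟨i, _, hi⟩ := Finset.exists_mem_eq_inf' Finset.univ_nonempty f
      rw [hi]; exact hfpos i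
    have hρM : ρ ≤ M := min_le_left _ _
    have hρf : ∀ i, ρ ≤ f i := fun i =>
      le_trans (min_le_right _ _) (Finset.inf'_le f (Finset.mem_univ i))
    set η : ℕ → ℝ := fun k => min ρ ((1 / 2 : ℝ) ^ k) with hη_def
    have hηpos : ∀ k, 0 < η k := fun k => lt_min hρpos (by positivity)
    have hηρ : ∀ k, η k ≤ ρ := fun k => min_le_left _ _
    have hηpow : ∀ k, η k ≤ (1 / 2 : ℝ) ^ k := fun k => min_le_right _ _
    set K : Set U := X ∩ Metric.closedBall (a 0) (f 0 + M) with hK_def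
    have hKX : K ⊆ X := Set.inter_subset_left
    have hKcompact : IsCompact K :=
      hprop K hKX (hX.inter Metric.isClosed_closedBall)
        (Metric.isBounded_closedBall.subset Set.inter_subset_right)
    -- `Good k w` : w realizes f on the a's and approximately realizes g on K
    set Good : ℕ → U → Prop := fun k w =>
      (∀ i, dist w (a i) = f i) ∧ ∀ x ∈ K, |dist w x - g x| ≤ η k with hGood_def
    -- a finite net of K of any positive radius
    have hnet : ∀ ε : ℝ, 0 < ε → ∃ t : Set U, t ⊆ K ∧ t.Finite ∧
        K ⊆ ⋃ y ∈ t, Metric.ball y ε := fun ε hε =>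
      finite_cover_balls_of_compact hKcompact hε
    -- base step
    have hbase : ∃ w, Good 0 w := by
      obtain ⟨t, htK, htfin, htcov⟩ := hnet (η 0 / 2) (by positivity)
      haveI : Fintype t := htfin.fintype
      set P : Fin (m + 1) ⊕ t → U := Sum.elim a (fun y => (y : U)) with hP
      set F : Fin (m + 1) ⊕ t → ℝ := Sum.elim f (fun y => g (y : U)) with hF
      have hKat : ∀ p q, |F p - F q| ≤ dist (P p) (P q) ∧ dist (P p) (P q) ≤ F p + F q := by
        rintro (i | y) (j | y') <;>
          simp only [hP, hF, Sum.elim_inl, Sum.elim_inr]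
        · exact hf i j
        · constructor
          · rw [← hga i]; exact hg1 _ _
          · rw [← hga i]; exact hg2 _ _
        · constructor
          · rw [← hga j, abs_sub_comm, dist_comm]; exact hg1 _ _
          · rw [← hga j, dist_comm, add_comm]; exact hg2 _ _
        · exact ⟨hg1 _ _, hg2 _ _⟩
      obtain ⟨z, hz⟩ := hU.fintype P F hKat
      refine ⟨z, fun i => hz (Sum.inl i), fun x hx => ?_⟩
      obtain ⟨y, hyt, hy⟩ := by simpa using htcov hx
      have h1 : |dist z x - dist z (⟨y, hyt⟩ : t)| ≤ dist x y := abs_dist_sub_le' z x y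
      have h2 : dist z (⟨y, hyt⟩ : t) = g y := hz (Sum.inr ⟨y, hyt⟩)
      have h3 : |g y - g x| ≤ dist y x := hg1 y x
      have h4 : dist x y < η 0 / 2 := by
        first | exact hy | (rw [dist_comm]; exact hy)
      calc |dist z x - g x| ≤ |dist z x - g y| + |g y - g x| := by
            have := abs_sub_le (dist z x) (g y) (g x); linarith
        _ ≤ dist x y + dist y x := by
            rw [← h2] at *; exact add_le_add h1 h3
        _ ≤ η 0 := by rw [dist_comm y x]; linarith
    -- inductive step
    have hstep : ∀ k w, Good k w → ∃ w', Good (k + 1) w' ∧ dist w w' ≤ η k := by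
      intro k w hw
      obtain ⟨t, htK, htfin, htcov⟩ := hnet (η (k + 1) / 2) (by positivity)
      haveI : Fintype t := htfin.fintype
      set P : Fin (m + 1) ⊕ (Unit ⊕ t) → U :=
        Sum.elim a (Sum.elim (fun _ => w) (fun y => (y : U))) with hP
      set F : Fin (m + 1) ⊕ (Unit ⊕ t) → ℝ :=
        Sum.elim f (Sum.elim (fun _ => η k) (fun y => g (y : U))) with hF
      -- facts about w versus a's and points of K
      have hwa : ∀ i, dist w (a i) = f i := hw.1
      have hwK : ∀ x ∈ K, |dist w x - g x| ≤ η k := hw.2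
      have hgK : ∀ x ∈ K, M ≤ g x := fun x hx => hgX x (hKX hx)
      have hηk : η k ≤ M := le_trans (hηρ k) hρM
      have cond_aw : ∀ i : Fin (m + 1),
          |f i - η k| ≤ dist (a i) w ∧ dist (a i) w ≤ f i + η k := by
        intro i
        rw [dist_comm, hwa i]
        constructor
        · rw [abs_le]
          have h1 : η k ≤ f i := le_trans (hηρ k) (hρf i)
          have h2 : 0 < η k := hηpos k
          constructor <;> linarith
        · linarith [(hηpos k).le]
      have cond_wy : ∀ y : U, y ∈ t →
          |η k - g y| ≤ dist w y ∧ dist w y ≤ η k + g y := by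
        intro y hyt
        have hyK := htK hyt
        have h1 := hwK y hyK
        have h2 := hgK y hyK
        rw [abs_le] at h1
        constructor
        · rw [abs_le]
          constructor <;> [linarith; linarith]
        · linarith
      have hKat : ∀ p q, |F p - F q| ≤ dist (P p) (P q) ∧ dist (P p) (P q) ≤ F p + F q := by
        rintro (i | (_ | y)) (j | (_ | y')) <;>
          simp only [hP, hF, Sum.elim_inl, Sum.elim_inr]
        · exact hf i j
        · exact cond_aw i
        · constructor
          · rw [← hga i]; exact hg1 _ _
          · rw [← hga i]; exact hg2 _ _
        · obtain ⟨h1, h2⟩ := cond_aw j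
          rw [abs_sub_comm] at h1
          rw [dist_comm] at h1 h2
          exact ⟨h1, by linarith⟩
        · simp only [dist_self, sub_self, abs_zero]
          exact ⟨le_rfl, by positivity⟩
        · exact cond_wy y' y'.2
        · constructor
          · rw [← hga j, abs_sub_comm, dist_comm]; exact hg1 _ _
          · rw [← hga j, dist_comm, add_comm]; exact hg2 _ _
        · obtain ⟨h1, h2⟩ := cond_wy y y.2
          rw [abs_sub_comm] at h1
          rw [dist_comm] at h1 h2
          exact ⟨h1, by linarith⟩
        · exact ⟨hg1 _ _, hg2 _ _⟩
      obtain ⟨z, hz⟩ := hU.fintype P F hKat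
      have hzw : dist z w = η k := hz (Sum.inr (Sum.inl ()))
      refine ⟨z, ⟨fun i => hz (Sum.inl i), fun x hx => ?_⟩, by rw [dist_comm]; exact hzw.le⟩
      obtain ⟨y, hyt, hy⟩ := by simpa using htcov hx
      have h1 : |dist z x - dist z (⟨y, hyt⟩ : t)| ≤ dist x y := abs_dist_sub_le' z x y
      have h2 : dist z (⟨y, hyt⟩ : t) = g y := hz (Sum.inr (Sum.inr ⟨y, hyt⟩))
      have h3 : |g y - g x| ≤ dist y x := hg1 y x
      have h4 : dist x y < η (k + 1) / 2 := by
        first | exact hy | (rw [dist_comm]; exact hy)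
      calc |dist z x - g x| ≤ |dist z x - g y| + |g y - g x| := by
            have := abs_sub_le (dist z x) (g y) (g x); linarith
        _ ≤ dist x y + dist y x := by
            rw [← h2] at *; exact add_le_add h1 h3
        _ ≤ η (k + 1) := by rw [dist_comm y x]; linarith
    -- build the Cauchy sequence
    obtain ⟨z, hzGood, hzdist⟩ := dep_choice Good (fun k w w' => dist w w' ≤ η k) hbase hstep
    have hcauchy : CauchySeq z := by
      apply cauchySeq_of_le_geometric (1 / 2 : ℝ) 1 (by norm_num)
      intro k
      calc dist (z k) (z (k + 1)) ≤ η k := hzdist k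
        _ ≤ (1 / 2 : ℝ) ^ k := hηpow k
        _ = 1 * (1 / 2 : ℝ) ^ k := (one_mul _).symm
    obtain ⟨w, hw⟩ := cauchySeq_tendsto_of_complete hcauchy
    have hηtendsto : Tendsto η atTop (𝓝 0) :=
      squeeze_zero (fun k => (hηpos k).le) hηpow
        (tendsto_pow_atTop_nhds_zero_of_lt_one (by norm_num) (by norm_num))
    refine ⟨w, fun i => ?_, fun x hx => ?_⟩
    · have t1 : Tendsto (fun k => dist (z k) (a i)) atTop (𝓝 (dist w (a i))) :=
        hw.dist tendsto_const_nhds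
      have t2 : Tendsto (fun k => dist (z k) (a i)) atTop (𝓝 (f i)) := by
        have : (fun k => dist (z k) (a i)) = fun _ => f i := funext fun k => (hzGood k).1 i
        rw [this]; exact tendsto_const_nhds
      exact tendsto_nhds_unique t1 t2
    · by_cases hxK : x ∈ K
      · have t1 : Tendsto (fun k => dist (z k) x) atTop (𝓝 (dist w x)) :=
          hw.dist tendsto_const_nhds
        have t2 : Tendsto (fun k => g x - η k) atTop (𝓝 (g x)) := by
          simpa using tendsto_const_nhds.sub hηtendsto
        have hle : ∀ k, g x - η k ≤ dist (z k) x := by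
          intro k
          have := (hzGood k).2 x hxK
          rw [abs_le] at this
          linarith
        have : g x ≤ dist w x := le_of_tendsto_of_tendsto' t2 t1 hle
        exact le_trans (hgX x hx) this
      · have hxball : ¬ x ∈ Metric.closedBall (a 0) (f 0 + M) := fun hc => hxK ⟨hx, hc⟩
        rw [Metric.mem_closedBall, not_le] at hxball
        have hwa0 : dist w (a 0) = f 0 := by
          have t1 : Tendsto (fun k => dist (z k) (a 0)) atTop (𝓝 (dist w (a 0))) :=
            hw.dist tendsto_const_nhds
          have t2 : Tendsto (fun k => dist (z k) (a 0)) atTop (𝓝 (f 0)) := by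
            have : (fun k => dist (z k) (a 0)) = fun _ => f 0 :=
              funext fun k => (hzGood k).1 0
            rw [this]; exact tendsto_const_nhds
          exact tendsto_nhds_unique t1 t2
        have : dist x (a 0) ≤ dist x w + dist w (a 0) := dist_triangle _ _ _
        rw [hwa0] at this
        rw [dist_comm]
        linarith

/-- A subset `Y` of a metric space is finitely injective if every Katetov map on a
finite subset of `Y` is realized by a point of `Y`. -/
def FinitelyInjectiveOn {X : Type*} [MetricSpace X] (Y : Set X) : Prop :=
  ∀ (n : ℕ) (x : Fin n → X), (∀ i, x i ∈ Y) → ∀ f : Fin n → ℝ,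
    (∀ i j, |f i - f j| ≤ dist (x i) (x j) ∧ dist (x i) (x j) ≤ f i + f j) →
    ∃ z ∈ Y, ∀ i, dist z (x i) = f i

theorem main_first (U : Type*) [MetricSpace U]
    [CompleteSpace U] [TopologicalSpace.SeparableSpace U] [Nonempty U]
    (hU : FinitelyInjective U) (X : Set U) (hX : IsClosed X)
    (hprop : ∀ K ⊆ X, IsClosed K → Bornology.IsBounded K → IsCompact K)
    (M : ℝ) (hM : 0 < M) :
    FinitelyInjectiveOn {z : U | ∀ x ∈ X, M ≤ dist z x} := by
  intro n x hxY f hf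
  match n with
  | 0 =>
    -- need some point of Y; use the key lemma with a constant anchor
    obtain ⟨p⟩ := ‹Nonempty U›
    have hc1 : ∀ u w : U, |(M + dist u p) - (M + dist w p)| ≤ dist u w := by
      intro u w
      have := abs_dist_sub_le u w p
      simpa using this
    have hc2 : ∀ u w : U, dist u w ≤ (M + dist u p) + (M + dist w p) := by
      intro u w
      have := dist_triangle u p w
      have := dist_comm p w
      have hd : dist p w = dist w p := dist_comm p w
      nlinarith [dist_triangle u p w, dist_comm p w, hM.le]
    obtain ⟨z, _, hz2⟩ := key_lemma hU X hX hprop M hM 0 (fun _ => p) (fun _ => M)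
      (fun i j => ⟨by simp, by simp; positivity⟩)
      (fun u => M + dist u p)
      (fun u w => hc1 u w)
      (fun u w => hc2 u w)
      (fun i => by simp)
      (fun x hx => le_add_of_nonneg_right dist_nonneg)
    exact ⟨z, fun x hx => hz2 x hx, fun i => i.elim0⟩
  | Nat.succ m =>
    -- the upper Katetov extension of f
    classical
    have hfnn : ∀ i, 0 ≤ f i := by
      intro i
      have := (hf i i).2
      simp only [dist_self] at this
      linarith
    set g : U → ℝ := fun u => Finset.univ.inf' Finset.univ_nonempty fun i => f i + dist u (x i)
      with hg_def
    have hg_le : ∀ (u : U) i, g u ≤ f i + dist u (x i) := fun u i =>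
      Finset.inf'_le _ (Finset.mem_univ i)
    have hg_exists : ∀ u : U, ∃ i, g u = f i + dist u (x i) := by
      intro u
      obtain ⟨i, _, hi⟩ := Finset.exists_mem_eq_inf' Finset.univ_nonempty
        (fun i => f i + dist u (x i))
      exact ⟨i, hi⟩
    have hg1 : ∀ u w, |g u - g w| ≤ dist u w := by
      intro u w
      rw [abs_le]
      obtain ⟨i, hi⟩ := hg_exists u
      obtain ⟨j, hj⟩ := hg_exists w
      constructor
      · have h1 : g w ≤ f i + dist w (x i) := hg_le w i
        have h2 : dist w (x i) ≤ dist w u + dist u (x i) := dist_triangle _ _ _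
        have h3 : dist w u = dist u w := dist_comm w u
        rw [hi]; linarith
      · have h1 : g u ≤ f j + dist u (x j) := hg_le u j
        have h2 : dist u (x j) ≤ dist u w + dist w (x j) := dist_triangle _ _ _
        rw [hj]; linarith
    have hg2 : ∀ u w, dist u w ≤ g u + g w := by
      intro u w
      obtain ⟨i, hi⟩ := hg_exists u
      obtain ⟨j, hj⟩ := hg_exists w
      have h1 : dist (x i) (x j) ≤ f i + f j := (hf i j).2
      have h2 : dist u w ≤ dist u (x i) + dist (x i) (x j) + dist (x j) w :=
        dist_triangle4 u (x i) (x j) w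
      rw [hi, hj, dist_comm (x j) w] at *
      linarith
    have hga : ∀ i, g (x i) = f i := by
      intro i
      apply le_antisymm
      · have := hg_le (x i) i; simpa using this
      · obtain ⟨j, hj⟩ := hg_exists (x i)
        rw [hj]
        have habs := abs_le.mp (hf i j).1
        linarith [habs.1]
    have hgX : ∀ x' ∈ X, M ≤ g x' := by
      intro x' hx'
      obtain ⟨i, hi⟩ := hg_exists x'
      have hYi : M ≤ dist (x i) x' := hxY i x' hx'
      rw [hi, dist_comm x' (x i)]
      linarith [hfnn i]
    obtain ⟨z, hz1, hz2⟩ := key_lemma hU X hX hprop M hM m x f hf g hg1 hg2 hga hgX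
    exact ⟨z, fun x' hx' => hz2 x' hx', hz1⟩

-- Back-and-forth machinery for uniqueness of the Urysohn space


section BF
variable {A B : Type*} [MetricSpace A] [MetricSpace B]

open Classical in
noncomputable def bfAux (a : ℕ → A) (b : ℕ → B) : (n : ℕ) → (Fin (n + 1) → A × B)
  | 0 => fun _ => (a 0, b 0)
  | n + 1 =>
    let q := bfAux a b n
    if (n + 1) % 2 = 0 then
      Fin.snoc q (a ((n + 1) / 2),
        if h : ∃ w : B, ∀ i : Fin (n + 1), dist w (q i).2 = dist (a ((n + 1) / 2)) (q i).1
        then h.choose else b 0)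
    else
      Fin.snoc q
        (if h : ∃ w : A, ∀ i : Fin (n + 1), dist w (q i).1 = dist (b ((n + 1) / 2)) (q i).2
         then h.choose else a 0, b ((n + 1) / 2))

lemma bfAux_castSucc (a : ℕ → A) (b : ℕ → B) (n : ℕ) (i : Fin (n + 1)) :
    bfAux a b (n + 1) (Fin.castSucc i) = bfAux a b n i := by
  rw [bfAux]
  split <;> simp [Fin.snoc_castSucc]

def BFInv (a : ℕ → A) (b : ℕ → B) (n : ℕ) (q : Fin (n + 1) → A × B) : Prop :=
  (∀ i j, dist (q i).1 (q j).1 = dist (q i).2 (q j).2) ∧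
  (∀ i : Fin (n + 1),
    ((i : ℕ) % 2 = 0 → (q i).1 = a ((i : ℕ) / 2)) ∧
    ((i : ℕ) % 2 = 1 → (q i).2 = b ((i : ℕ) / 2)))

lemma bfAux_inv (hA : FinitelyInjective A) (hB : FinitelyInjective B)
    (a : ℕ → A) (b : ℕ → B) : ∀ n, BFInv a b n (bfAux a b n) := by
  intro n
  induction n with
  | zero =>
    refine ⟨fun i j => by simp [bfAux], fun i => ⟨fun _ => by simp [bfAux], fun h => ?_⟩⟩
    · exact absurd h (by have := i.isLt; omega)
  | succ n ih =>
    set q := bfAux a b n with hq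
    rcases Nat.even_or_odd (n + 1) with he | ho
    · -- even step
      have hpar : (n + 1) % 2 = 0 := Nat.even_iff.mp he
      have hex : ∃ w : B, ∀ i : Fin (n + 1),
          dist w (q i).2 = dist (a ((n + 1) / 2)) (q i).1 := by
        apply hB (n + 1) (fun i => (q i).2) (fun i => dist (a ((n + 1) / 2)) (q i).1)
        intro i j
        constructor
        · rw [← ih.1 i j]; exact abs_dist_sub_le' _ _ _
        · rw [← ih.1 i j]; exact dist_triangle_left _ _ _
      have hunf : bfAux a b (n + 1) =
          Fin.snoc q (a ((n + 1) / 2), hex.choose) := by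
        rw [bfAux, if_pos hpar, dif_pos hex]
      rw [hunf]
      constructor
      · intro i j
        induction i using Fin.lastCases with
        | last =>
          induction j using Fin.lastCases with
          | last => simp
          | cast j =>
            simp only [Fin.snoc_last, Fin.snoc_castSucc]
            exact (hex.choose_spec j).symm
        | cast i =>
          induction j using Fin.lastCases with
          | last =>
            simp only [Fin.snoc_last, Fin.snoc_castSucc]
            rw [dist_comm ((q i).1), dist_comm ((q i).2)]
            exact (hex.choose_spec i).symm
          | cast j => simp only [Fin.snoc_castSucc]; exact ih.1 i j
      · intro i
        induction i using Fin.lastCases with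
        | last =>
          refine ⟨fun _ => by simp, fun h => ?_⟩
          simp only [Fin.val_last] at h
          omega
        | cast i =>
          simpa [Fin.snoc_castSucc] using ih.2 i
    · -- odd step
      have hpar : ¬ (n + 1) % 2 = 0 := by
        rw [Nat.odd_iff] at ho; omega
      have hex : ∃ w : A, ∀ i : Fin (n + 1),
          dist w (q i).1 = dist (b ((n + 1) / 2)) (q i).2 := by
        apply hA (n + 1) (fun i => (q i).1) (fun i => dist (b ((n + 1) / 2)) (q i).2)
        intro i j
        constructor
        · rw [ih.1 i j]; exact abs_dist_sub_le' _ _ _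
        · rw [ih.1 i j]; exact dist_triangle_left _ _ _
      have hunf : bfAux a b (n + 1) =
          Fin.snoc q (hex.choose, b ((n + 1) / 2)) := by
        rw [bfAux, if_neg hpar, dif_pos hex]
      rw [hunf]
      constructor
      · intro i j
        induction i using Fin.lastCases with
        | last =>
          induction j using Fin.lastCases with
          | last => simp
          | cast j =>
            simp only [Fin.snoc_last, Fin.snoc_castSucc]
            exact hex.choose_spec j
        | cast i =>
          induction j using Fin.lastCases with
          | last =>
            simp only [Fin.snoc_last, Fin.snoc_castSucc]
            rw [dist_comm ((q i).1), dist_comm ((q i).2)]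
            exact hex.choose_spec i
          | cast j => simp only [Fin.snoc_castSucc]; exact ih.1 i j
      · intro i
        induction i using Fin.lastCases with
        | last =>
          refine ⟨fun h => ?_, fun _ => by simp⟩
          simp only [Fin.val_last] at h
          rw [Nat.odd_iff] at ho; omega
        | cast i =>
          simpa [Fin.snoc_castSucc] using ih.2 i

noncomputable def bfSeq (a : ℕ → A) (b : ℕ → B) (n : ℕ) : A × B :=
  bfAux a b n (Fin.last n)

lemma bfAux_eq_bfSeq (a : ℕ → A) (b : ℕ → B) :
    ∀ n (i : Fin (n + 1)), bfAux a b n i = bfSeq a b (i : ℕ) := by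
  intro n
  induction n with
  | zero =>
    intro i
    have : i = 0 := Fin.eq_zero i
    subst this; rfl
  | succ n ih =>
    intro i
    induction i using Fin.lastCases with
    | last => rfl
    | cast i => rw [bfAux_castSucc]; simpa using ih i

lemma bfSeq_dist (hA : FinitelyInjective A) (hB : FinitelyInjective B)
    (a : ℕ → A) (b : ℕ → B) (i j : ℕ) :
    dist (bfSeq a b i).1 (bfSeq a b j).1 = dist (bfSeq a b i).2 (bfSeq a b j).2 := by
  set n := max i j
  have hi : i < n + 1 := by omega
  have hj : j < n + 1 := by omega
  have := (bfAux_inv hA hB a b n).1 ⟨i, hi⟩ ⟨j, hj⟩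
  rwa [bfAux_eq_bfSeq a b n ⟨i, hi⟩, bfAux_eq_bfSeq a b n ⟨j, hj⟩] at this

lemma bfSeq_even (hA : FinitelyInjective A) (hB : FinitelyInjective B)
    (a : ℕ → A) (b : ℕ → B) (m : ℕ) : (bfSeq a b (2 * m)).1 = a m := by
  have := ((bfAux_inv hA hB a b (2 * m)).2 (Fin.last (2 * m))).1 (by simp [Nat.mul_mod_right])
  rw [bfAux_eq_bfSeq] at this
  simpa using this

lemma bfSeq_odd (hA : FinitelyInjective A) (hB : FinitelyInjective B)
    (a : ℕ → A) (b : ℕ → B) (m : ℕ) : (bfSeq a b (2 * m + 1)).2 = b m := by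
  have := ((bfAux_inv hA hB a b (2 * m + 1)).2 (Fin.last (2 * m + 1))).2 (by rw [Fin.val_last]; omega)
  rw [bfAux_eq_bfSeq] at this
  simp only [Fin.val_last] at this
  rw [this]
  congr 1
  omega

end BF

lemma exists_isometry_extend {A B : Type*} [MetricSpace A] [MetricSpace B] [CompleteSpace B]
    (u : ℕ → A) (v : ℕ → B) (hu : DenseRange u)
    (h : ∀ i j, dist (u i) (u j) = dist (v i) (v j)) :
    ∃ Φ : A → B, Isometry Φ ∧ ∀ n, Φ (u n) = v n := by
  have hap : ∀ (x : A) (k : ℕ), ∃ n, dist x (u n) < (1 / 2 : ℝ) ^ k := by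
    intro x k
    exact (Metric.denseRange_iff.mp hu) x _ (by positivity)
  choose N hN using hap
  have htendsto : ∀ x : A, Tendsto (fun k => u (N x k)) atTop (𝓝 x) := by
    intro x
    rw [tendsto_iff_dist_tendsto_zero]
    refine squeeze_zero (fun k => dist_nonneg) (fun k => (dist_comm (u (N x k)) x ▸ (hN x k).le))
      ?_
    exact tendsto_pow_atTop_nhds_zero_of_lt_one (by norm_num) (by norm_num)
  have hpow : Tendsto (fun k : ℕ => 2 * (1 / 2 : ℝ) ^ k) atTop (𝓝 0) := by
    have := tendsto_pow_atTop_nhds_zero_of_lt_one (r := (1/2 : ℝ)) (by norm_num) (by norm_num)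
    simpa using this.const_mul 2
  have hc : ∀ x : A, CauchySeq (fun k => v (N x k)) := by
    intro x
    apply cauchySeq_of_le_tendsto_0 (fun k => 2 * (1 / 2 : ℝ) ^ k) _ hpow
    intro m n k hm hn
    rw [← h]
    calc dist (u (N x m)) (u (N x n)) ≤ dist (u (N x m)) x + dist x (u (N x n)) :=
          dist_triangle_left _ _ _ |>.trans (by rw [dist_comm x (u (N x m))])
      _ ≤ (1 / 2 : ℝ) ^ m + (1 / 2 : ℝ) ^ n := by
          rw [dist_comm (u (N x m)) x]
          exact add_le_add (hN x m).le (hN x n).le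
      _ ≤ (1 / 2 : ℝ) ^ k + (1 / 2 : ℝ) ^ k :=
          add_le_add (pow_le_pow_of_le_one (by norm_num) (by norm_num) hm)
            (pow_le_pow_of_le_one (by norm_num) (by norm_num) hn)
      _ = 2 * (1 / 2 : ℝ) ^ k := by ring
  choose Φ hΦ using fun x => cauchySeq_tendsto_of_complete (hc x)
  have hval : ∀ n, Φ (u n) = v n := by
    intro n
    have t1 : Tendsto (fun k => dist (v (N (u n) k)) (v n)) atTop (𝓝 (dist (Φ (u n)) (v n))) :=
      (hΦ (u n)).dist tendsto_const_nhds
    have t2 : Tendsto (fun k => dist (v (N (u n) k)) (v n)) atTop (𝓝 0) := by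
      have heq : (fun k => dist (v (N (u n) k)) (v n)) =
          fun k => dist (u (N (u n) k)) (u n) := by
        funext k; rw [h]
      rw [heq]
      refine squeeze_zero (fun k => dist_nonneg) (fun k => ?_)
        (tendsto_pow_atTop_nhds_zero_of_lt_one (r := (1/2 : ℝ)) (by norm_num) (by norm_num))
      rw [dist_comm]
      exact (hN (u n) k).le
    have := tendsto_nhds_unique t1 t2
    exact dist_eq_zero.mp this
  refine ⟨Φ, Isometry.of_dist_eq fun x y => ?_, hval⟩
  have t1 : Tendsto (fun k => dist (v (N x k)) (v (N y k))) atTop (𝓝 (dist (Φ x) (Φ y))) :=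
    (hΦ x).dist (hΦ y)
  have t2 : Tendsto (fun k => dist (v (N x k)) (v (N y k))) atTop (𝓝 (dist x y)) := by
    have heq : (fun k => dist (v (N x k)) (v (N y k))) =
        fun k => dist (u (N x k)) (u (N y k)) := by funext k; rw [h]
    rw [heq]
    exact (htendsto x).dist (htendsto y)
  exact tendsto_nhds_unique t1 t2

lemma urysohn_unique {A B : Type*} [MetricSpace A] [MetricSpace B]
    [CompleteSpace A] [CompleteSpace B]
    [TopologicalSpace.SeparableSpace A] [TopologicalSpace.SeparableSpace B]
    [Nonempty A] [Nonempty B]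
    (hA : FinitelyInjective A) (hB : FinitelyInjective B) : Nonempty (A ≃ᵢ B) := by
  obtain ⟨a, ha⟩ := TopologicalSpace.exists_dense_seq A
  obtain ⟨b, hb⟩ := TopologicalSpace.exists_dense_seq B
  set u : ℕ → A := fun n => (bfSeq a b n).1 with hu_def
  set v : ℕ → B := fun n => (bfSeq a b n).2 with hv_def
  have hdist : ∀ i j, dist (u i) (u j) = dist (v i) (v j) := fun i j => bfSeq_dist hA hB a b i j
  have hu : DenseRange u := by
    have hsub : Set.range a ⊆ Set.range u := by
      rintro _ ⟨m, rfl⟩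
      exact ⟨2 * m, bfSeq_even hA hB a b m⟩
    exact Dense.mono hsub ha
  have hv : DenseRange v := by
    have hsub : Set.range b ⊆ Set.range v := by
      rintro _ ⟨m, rfl⟩
      exact ⟨2 * m + 1, bfSeq_odd hA hB a b m⟩
    exact Dense.mono hsub hb
  obtain ⟨Φ, hΦiso, hΦval⟩ := exists_isometry_extend u v hu hdist
  obtain ⟨Ψ, hΨiso, hΨval⟩ := exists_isometry_extend v u hv (fun i j => (hdist i j).symm)
  have hleft : Ψ ∘ Φ = id := by
    refine hu.equalizer (hΨiso.continuous.comp hΦiso.continuous) continuous_id ?_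
    funext n
    simp [Function.comp, hΦval n, hΨval n]
  have hright : Φ ∘ Ψ = id := by
    refine hv.equalizer (hΦiso.continuous.comp hΨiso.continuous) continuous_id ?_
    funext n
    simp [Function.comp, hΨval n, hΦval n]
  exact ⟨⟨⟨Φ, Ψ, fun x => congrFun hleft x, fun y => congrFun hright y⟩, hΦiso.edist_eq⟩⟩


/-- If `U` is the Urysohn space, `X ⊆ U` is closed and proper, and `M > 0`, then
`Y = {z : d(z,x) ≥ M for all x ∈ X}` is finitely injective, and hence isometric to `U`. -/
theorem complement_neighborhood_heine_borel (U : Type*) [MetricSpace U]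
    [CompleteSpace U] [TopologicalSpace.SeparableSpace U] [Nonempty U]
    (hU : FinitelyInjective U) (X : Set U) (hX : IsClosed X)
    (hprop : ∀ K ⊆ X, IsClosed K → Bornology.IsBounded K → IsCompact K)
    (M : ℝ) (hM : 0 < M) :
    FinitelyInjectiveOn {z : U | ∀ x ∈ X, M ≤ dist z x} ∧
      Nonempty (({z : U | ∀ x ∈ X, M ≤ dist z x} : Set U) ≃ᵢ U) := by
  have hYfi : FinitelyInjectiveOn {z : U | ∀ x ∈ X, M ≤ dist z x} :=
    main_first U hU X hX hprop M hM
  refine ⟨hYfi, ?_⟩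
  set Y : Set U := {z : U | ∀ x ∈ X, M ≤ dist z x} with hY_def
  have hYclosed : IsClosed Y := by
    have : Y = ⋂ x ∈ X, {z : U | M ≤ dist z x} := by
      ext z; simp [hY_def, Set.mem_iInter]
    rw [this]
    exact isClosed_biInter fun x _ =>
      isClosed_le continuous_const (continuous_id.dist continuous_const)
  haveI : CompleteSpace Y := hYclosed.completeSpace_coe
  haveI : SecondCountableTopology U := UniformSpace.secondCountable_of_separable U
  haveI : TopologicalSpace.SeparableSpace Y :=
    TopologicalSpace.SecondCountableTopology.to_separableSpace
  haveI : Nonempty Y := by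
    obtain ⟨z, hz, -⟩ := hYfi 0 (fun i => i.elim0) (fun i => i.elim0) (fun i => i.elim0)
      (fun i => i.elim0)
    exact ⟨⟨z, hz⟩⟩
  have hYinj : FinitelyInjective Y := by
    intro n x f hf
    obtain ⟨z, hzY, hz⟩ := hYfi n (fun i => (x i : U)) (fun i => (x i).2) f (by
      intro i j
      simpa [Subtype.dist_eq] using hf i j)
    exact ⟨⟨z, hzY⟩, fun i => by simpa [Subtype.dist_eq] using hz i⟩
  exact urysohn_unique hYinj hU
end

section
/- Let U be a finitely injective metric space, X ⊆ U a compact subset, and M > 0. Then Y = { z ∈ U : d(z,X) ≥ M } is finitely injective: for all y₁,…,yₙ ∈ Y and every Katetov map f on {y₁,…,yₙ}, there exists c ∈ Y with d(c,yᵢ) = f(yᵢ) for all i. -/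
/-- A compact set admits a finite `δ`-net consisting of its points. -/
lemma exists_finite_net {U : Type*} [MetricSpace U] (X : Set U) (hX : IsCompact X)
    (δ : ℝ) (hδ : 0 < δ) :
    ∃ (m : ℕ) (p : Fin m → U), (∀ k, p k ∈ X) ∧ ∀ x ∈ X, ∃ k, dist x (p k) < δ := by
  obtain ⟨t, ht⟩ := hX.elim_finite_subcover (fun i : X => Metric.ball (i : U) δ)
    (fun i => Metric.isOpen_ball) (fun x hx => Set.mem_iUnion.2
      ⟨⟨x, hx⟩, Metric.mem_ball_self hδ⟩)
  refine ⟨t.card, fun k => ((t.equivFin.symm k : X) : U), fun k => (t.equivFin.symm k : X).2,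
    fun x hx => ?_⟩
  obtain ⟨i, hi, hxi⟩ := Set.mem_iUnion₂.1 (ht hx)
  exact ⟨t.equivFin ⟨i, hi⟩, by simpa using hxi⟩

/-- If `U` is finitely injective, `X ⊆ U` compact and `M > 0`, then
`Y = {z : d(z,X) ≥ M}` is finitely injective. -/
theorem complement_neighborhood_compact (U : Type*) [MetricSpace U]
    (hU : FinitelyInjective U) (X : Set U) (hXne : X.Nonempty) (hX : IsCompact X)
    (M : ℝ) (hM : 0 < M) (n : ℕ) (y : Fin n → U)
    (hy : ∀ i, M ≤ Metric.infDist (y i) X) (f : Fin n → ℝ)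
    (hf : ∀ i j, |f i - f j| ≤ dist (y i) (y j) ∧ dist (y i) (y j) ≤ f i + f j) :
    ∃ c : U, M ≤ Metric.infDist c X ∧ ∀ i, dist c (y i) = f i := by
  have hf0 : ∀ i, 0 ≤ f i := by
    intro i
    have h := (hf i i).2
    simp at h
    linarith
  -- helper to conclude `M ≤ infDist c X` from pointwise bounds
  have infD : ∀ c : U, (∀ x ∈ X, M ≤ dist c x) → M ≤ Metric.infDist c X := by
    intro c hc
    by_contra h
    push_neg at h
    obtain ⟨x, hx, hlt⟩ := (Metric.infDist_lt_iff hXne).1 h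
    exact absurd (hc x hx) (not_le.2 hlt)
  by_cases h0 : ∃ i, f i = 0
  · -- degenerate case : `c = y i`
    obtain ⟨i, hi⟩ := h0
    refine ⟨y i, infD (y i) (fun x hx => le_trans (hy i)
      (Metric.infDist_le_dist_of_mem hx)), fun j => ?_⟩
    obtain ⟨h1, h2⟩ := hf i j
    rw [hi] at h1 h2
    simp at h1
    have h3 := abs_le.1 h1
    exact le_antisymm (by linarith [h3.2]) (by linarith [h3.1])
  · push_neg at h0
    rcases Nat.eq_zero_or_pos n with hn | hn
    · -- no constraint points : build a point far from `X` directly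
      subst hn
      obtain ⟨x₀, hx₀⟩ := hXne
      obtain ⟨m, p, hpX, hpnet⟩ := exists_finite_net X hX 1 one_pos
      set v : Fin m → ℝ := fun k => M + 1 + dist (p k) x₀ with hv
      have hkat : ∀ k l, |v k - v l| ≤ dist (p k) (p l) ∧ dist (p k) (p l) ≤ v k + v l := by
        intro k l
        constructor
        · have e : v k - v l = dist (p k) x₀ - dist (p l) x₀ := by simp only [hv]; ring
          rw [e]
          exact abs_dist_sub_le _ _ _
        · have := dist_triangle (p k) x₀ (p l)
          have h2 : dist x₀ (p l) = dist (p l) x₀ := dist_comm _ _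
          simp only [hv]
          linarith
      obtain ⟨z, hz⟩ := hU m p v hkat
      refine ⟨z, infD z (fun x hx => ?_), fun i => i.elim0⟩
      obtain ⟨k, hk⟩ := hpnet x hx
      have h1 : dist z (p k) ≤ dist z x + dist x (p k) := dist_triangle _ _ _
      have h2 : dist z (p k) = M + 1 + dist (p k) x₀ := hz k
      have h3 : (0:ℝ) ≤ dist (p k) x₀ := dist_nonneg
      rw [h2] at h1
      linarith
    · -- main case : all `f i > 0`
      have hfpos : ∀ i, 0 < f i := fun i => lt_of_le_of_ne (hf0 i) (Ne.symm (h0 i))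
      have hne : (Finset.univ : Finset (Fin n)).Nonempty := ⟨⟨0, hn⟩, Finset.mem_univ _⟩
      set δ : ℝ := Finset.univ.inf' hne f with hδdef
      have hδpos : 0 < δ := by
        obtain ⟨i, _, hi⟩ := Finset.exists_mem_eq_inf' hne f
        rw [hδdef, hi]; exact hfpos i
      have hδle : ∀ i, δ ≤ f i := fun i => Finset.inf'_le _ (Finset.mem_univ i)
      -- the minimal Katetov extension
      set g : U → ℝ := fun u => Finset.univ.inf' hne (fun i => f i + dist (y i) u) with hg
      have hgle : ∀ (i : Fin n) (u : U), g u ≤ f i + dist (y i) u :=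
        fun i u => Finset.inf'_le _ (Finset.mem_univ i)
      have hgex : ∀ u : U, ∃ i, g u = f i + dist (y i) u := by
        intro u
        obtain ⟨i, _, hi⟩ := Finset.exists_mem_eq_inf' hne (fun i => f i + dist (y i) u)
        exact ⟨i, hi⟩
      obtain ⟨m, p, hpX, hpnet⟩ := exists_finite_net X hX δ hδpos
      set v : Fin m → ℝ := fun k => g (p k) with hv
      -- lower bound for `v`
      have hvlb : ∀ k, M + δ ≤ v k := by
        intro k
        obtain ⟨i, hi⟩ := hgex (p k)
        have h1 : M ≤ dist (y i) (p k) :=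
          le_trans (hy i) (Metric.infDist_le_dist_of_mem (hpX k))
        have h2 := hδle i
        simp only [hv, hi]
        linarith
      -- Katetov conditions
      have hyx : ∀ (i : Fin n) (k : Fin m),
          |f i - v k| ≤ dist (y i) (p k) ∧ dist (y i) (p k) ≤ f i + v k := by
        intro i k
        obtain ⟨j, hj⟩ := hgex (p k)
        have t1 : dist (y i) (y j) ≤ dist (y i) (p k) + dist (p k) (y j) := dist_triangle _ _ _
        have t2 : dist (y i) (p k) ≤ dist (y i) (y j) + dist (y j) (p k) := dist_triangle _ _ _
        have t3 : dist (p k) (y j) = dist (y j) (p k) := dist_comm _ _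
        have hij := hf i j
        have habs := abs_le.1 hij.1
        have h1 : v k ≤ f i + dist (y i) (p k) := hgle i (p k)
        have h2 : f i - v k ≤ dist (y i) (p k) := by
          simp only [hv, hj]
          linarith [habs.1, habs.2]
        refine ⟨abs_le.2 ⟨by linarith, by linarith⟩, ?_⟩
        simp only [hv, hj]
        linarith [hij.2]
      have hxx : ∀ k l : Fin m,
          |v k - v l| ≤ dist (p k) (p l) ∧ dist (p k) (p l) ≤ v k + v l := by
        intro k l
        obtain ⟨i, hi⟩ := hgex (p k)
        obtain ⟨j, hj⟩ := hgex (p l)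
        have t1 : dist (y j) (p k) ≤ dist (y j) (p l) + dist (p l) (p k) := dist_triangle _ _ _
        have t2 : dist (y i) (p l) ≤ dist (y i) (p k) + dist (p k) (p l) := dist_triangle _ _ _
        have t3 : dist (p l) (p k) = dist (p k) (p l) := dist_comm _ _
        have t4 : dist (p k) (p l) ≤ dist (p k) (y i) + dist (y i) (y j) + dist (y j) (p l) :=
          dist_triangle4 _ _ _ _
        have t5 : dist (p k) (y i) = dist (y i) (p k) := dist_comm _ _
        have h1 : v k ≤ f j + dist (y j) (p k) := hgle j (p k)
        have h2 : v l ≤ f i + dist (y i) (p l) := hgle i (p l)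
        have hij := (hf i j).2
        constructor
        · refine abs_le.2 ⟨?_, ?_⟩
          · simp only [hv, hi, hj] at h1 ⊢
            linarith
          · simp only [hv, hi, hj] at h2 ⊢
            linarith
        · simp only [hv, hi, hj]
          linarith
      -- combined system
      set P : Fin (n + m) → U := Fin.append y p with hP
      set V : Fin (n + m) → ℝ := Fin.append f v with hV
      have hkat : ∀ a b : Fin (n + m),
          |V a - V b| ≤ dist (P a) (P b) ∧ dist (P a) (P b) ≤ V a + V b := by
        intro a b
        induction a using Fin.addCases with
        | left i =>
          induction b using Fin.addCases with
          | left j =>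
            simp only [hP, hV, Fin.append_left]
            exact hf i j
          | right k =>
            simp only [hP, hV, Fin.append_left, Fin.append_right]
            exact hyx i k
        | right k =>
          induction b using Fin.addCases with
          | left i =>
            simp only [hP, hV, Fin.append_left, Fin.append_right]
            obtain ⟨ha, hb⟩ := hyx i k
            rw [abs_sub_comm] at ha
            rw [dist_comm] at ha hb
            exact ⟨ha, by linarith⟩
          | right l =>
            simp only [hP, hV, Fin.append_right]
            exact hxx k l
      obtain ⟨z, hz⟩ := hU (n + m) P V hkat
      refine ⟨z, infD z (fun x hx => ?_), fun i => ?_⟩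
      · obtain ⟨k, hk⟩ := hpnet x hx
        have h1 : dist z (p k) ≤ dist z x + dist x (p k) := dist_triangle _ _ _
        have h2 := hz (Fin.natAdd n k)
        simp only [hP, hV, Fin.append_right] at h2
        have h3 := hvlb k
        rw [h2] at h1
        have h4 : (0:ℝ) ≤ dist x (p k) := dist_nonneg
        linarith
      · have h2 := hz (Fin.castAdd m i)
        simp only [hP, hV, Fin.append_left] at h2
        exact h2
end

section
/- A nonempty complete separable metric space with the approximate extension property is finitely injective (and hence isometric to the Urysohn space). The approximate extension property states: for all x₁,…,xₙ ∈ X, every Katetov map f on {x₁,…,xₙ}, and every ε > 0, there exists z ∈ X with |d(z,xᵢ) − f(xᵢ)| ≤ ε for all i. -/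
/-- One-point approximate Katetov extension step: from an ε-approximate realization we can
get a δ-approximate realization at distance at most ε + δ. -/
lemma approx_step {X : Type*} [MetricSpace X]
    (happrox : ∀ (n : ℕ) (x : Fin n → X) (f : Fin n → ℝ),
      (∀ i j, |f i - f j| ≤ dist (x i) (x j) ∧ dist (x i) (x j) ≤ f i + f j) →
      ∀ ε > (0 : ℝ), ∃ z : X, ∀ i, |dist z (x i) - f i| ≤ ε)
    {n : ℕ} (x : Fin (n + 1) → X) (f : Fin (n + 1) → ℝ)
    (hK : ∀ i j, |f i - f j| ≤ dist (x i) (x j) ∧ dist (x i) (x j) ≤ f i + f j)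
    {ε δ : ℝ} (hε : 0 < ε) (hδ : 0 < δ) (z : X)
    (hz : ∀ i, |dist z (x i) - f i| ≤ ε) :
    ∃ z' : X, (∀ i, |dist z' (x i) - f i| ≤ δ) ∧ dist z' z ≤ ε + δ := by
  set s : ℝ := Finset.univ.sup' Finset.univ_nonempty (fun i => |dist z (x i) - f i|) with hs
  have hs_le : s ≤ ε := Finset.sup'_le _ _ fun i _ => hz i
  have hs_ge : ∀ i, |dist z (x i) - f i| ≤ s := fun i =>
    Finset.le_sup' (fun i => |dist z (x i) - f i|) (Finset.mem_univ i)
  have hs_nonneg : 0 ≤ s := le_trans (abs_nonneg _) (hs_ge 0)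
  -- lower mixed inequality
  have hA : ∀ j, |s - f j| ≤ dist z (x j) := by
    intro j
    rw [abs_sub_le_iff]
    constructor
    · obtain ⟨k, -, hk⟩ := Finset.exists_mem_eq_sup' (Finset.univ_nonempty)
        (fun i => |dist z (x i) - f i|)
      rw [hs, hk]
      have h1 := dist_triangle z (x j) (x k)
      have h2 := (hK j k).2
      have h3 := abs_le.1 (hK k j).1
      have h4 := dist_triangle (x k) z (x j)
      rw [dist_comm (x k) z] at h4
      rcases abs_cases (dist z (x k) - f k) with ⟨h, -⟩ | ⟨h, -⟩ <;> rw [h] <;>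
        linarith [h3.1]
    · have := abs_le.1 (hs_ge j)
      linarith [this.1]
  have hB : ∀ j, dist z (x j) ≤ s + f j := by
    intro j
    have := abs_le.1 (hs_ge j)
    linarith [this.2]
  -- extended configuration
  set x' : Fin (n + 2) → X := Fin.cons z x with hx'
  set f' : Fin (n + 2) → ℝ := Fin.cons s f with hf'
  have hK' : ∀ i j, |f' i - f' j| ≤ dist (x' i) (x' j) ∧ dist (x' i) (x' j) ≤ f' i + f' j := by
    intro i j
    refine Fin.cases ?_ ?_ i <;> [skip; intro i'] <;> refine Fin.cases ?_ ?_ j <;>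
      try intro j'
    · simp [hx', hf']; linarith
    · simpa [hx', hf', dist_comm] using ⟨hA j', hB j'⟩
    · constructor
      · simpa [hx', hf', abs_sub_comm, dist_comm] using hA i'
      · simp only [hx', hf', Fin.cons_succ, Fin.cons_zero]
        rw [dist_comm]
        linarith [hB i']
    · simpa [hx', hf'] using hK i' j'
  obtain ⟨z', hz'⟩ := happrox (n + 2) x' f' hK' δ hδ
  refine ⟨z', fun i => ?_, ?_⟩
  · simpa [hx', hf'] using hz' i.succ
  · have := abs_le.1 (by simpa [hx', hf'] using hz' 0)
    linarith [this.2]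

/-- A nonempty complete separable metric space with the approximate extension
property is finitely injective. -/
theorem approx_extension_implies_finitelyInjective (X : Type*) [MetricSpace X]
    [Nonempty X] [CompleteSpace X] [TopologicalSpace.SeparableSpace X]
    (happrox : ∀ (n : ℕ) (x : Fin n → X) (f : Fin n → ℝ),
      (∀ i j, |f i - f j| ≤ dist (x i) (x j) ∧ dist (x i) (x j) ≤ f i + f j) →
      ∀ ε > (0 : ℝ), ∃ z : X, ∀ i, |dist z (x i) - f i| ≤ ε) :
    FinitelyInjective X := by
  intro n x f hK
  match n, x, f, hK with
  | 0, x, f, hK => exact ⟨Classical.arbitrary X, fun i => i.elim0⟩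
  | n + 1, x, f, hK =>
    set P : ℕ → X → Prop := fun k z => ∀ i, |dist z (x i) - f i| ≤ (1 / 2 : ℝ) ^ k with hP
    have hbase : ∃ z, P 0 z := by
      obtain ⟨z0, h0⟩ := happrox (n + 1) x f hK 1 one_pos
      exact ⟨z0, fun i => by simpa using h0 i⟩
    have hstep : ∀ k (z : X), P k z →
        ∃ z', P (k + 1) z' ∧ dist z' z ≤ (1 / 2 : ℝ) ^ k + (1 / 2 : ℝ) ^ (k + 1) := by
      intro k z hzk
      exact approx_step happrox x f hK (by positivity) (by positivity) z hzk
    let u : ∀ k : ℕ, {z : X // P k z} := fun k =>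
      Nat.rec ⟨hbase.choose, hbase.choose_spec⟩
        (fun k ih => ⟨(hstep k ih.1 ih.2).choose, (hstep k ih.1 ih.2).choose_spec.1⟩) k
    set v : ℕ → X := fun k => (u k).1 with hv
    have hvP : ∀ k, P k (v k) := fun k => (u k).2
    have hvd : ∀ k, dist (v (k + 1)) (v k) ≤ (1 / 2 : ℝ) ^ k + (1 / 2 : ℝ) ^ (k + 1) :=
      fun k => (hstep k (u k).1 (u k).2).choose_spec.2
    have hcauchy : CauchySeq v := by
      apply cauchySeq_of_le_geometric (1 / 2 : ℝ) 2 (by norm_num)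
      intro k
      rw [dist_comm]
      calc dist (v (k + 1)) (v k) ≤ (1 / 2 : ℝ) ^ k + (1 / 2 : ℝ) ^ (k + 1) := hvd k
        _ ≤ 2 * (1 / 2) ^ k := by
            rw [pow_succ]
            have : (0:ℝ) ≤ (1 / 2 : ℝ) ^ k := by positivity
            linarith
    obtain ⟨z, hz⟩ := cauchySeq_tendsto_of_complete hcauchy
    refine ⟨z, fun i => ?_⟩
    have h1 : Filter.Tendsto (fun k => dist (v k) (x i)) Filter.atTop (nhds (dist z (x i))) :=
      hz.dist tendsto_const_nhds
    have h2 : Filter.Tendsto (fun k => dist (v k) (x i)) Filter.atTop (nhds (f i)) := by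
      have h0 : Filter.Tendsto (fun k : ℕ => ((1 : ℝ) / 2) ^ k) Filter.atTop (nhds 0) :=
        tendsto_pow_atTop_nhds_zero_of_lt_one (by norm_num) (by norm_num)
      have h3 : Filter.Tendsto (fun k => dist (v k) (x i) - f i) Filter.atTop (nhds 0) :=
        squeeze_zero_norm (fun k => by simpa [Real.norm_eq_abs] using hvP k i) h0
      have := h3.add_const (f i)
      simpa using this
    exact tendsto_nhds_unique h1 h2
end

section
/- If X is a Polish metric space that is not proper (i.e., some closed bounded ball is not compact), then the space E(X) of Katetov maps on X with the sup metric is not separable. -/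
/-- `f` is a Katetov map on the metric space `X`. -/
def IsKatetov {X : Type*} [MetricSpace X] (f : X → ℝ) : Prop :=
  ∀ a b : X, |f a - f b| ≤ dist a b ∧ dist a b ≤ f a + f b

/-- Two Katetov maps are uniformly close: `|f p - g p| ≤ f x₀ + g x₀`. -/
theorem katetov_abs_sub_le {X : Type*} [MetricSpace X] {f g : X → ℝ}
    (hf : IsKatetov f) (hg : IsKatetov g) (x₀ p : X) :
    |f p - g p| ≤ f x₀ + g x₀ := by
  have h1 := (hf p x₀).1
  have h2 := (hg p x₀).1
  have h3 := (hf p x₀).2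
  have h4 := (hg p x₀).2
  rw [abs_sub_le_iff] at h1 h2 ⊢
  constructor <;> linarith [h1.1, h1.2, h2.1, h2.2]

/-- If `X` is Polish but not proper, then `E(X)` (with the sup metric) is not
separable: there is no countable family of Katetov maps which is sup-norm dense in
the set of all Katetov maps. -/
theorem katetov_space_not_separable_of_not_proper (X : Type*) [MetricSpace X]
    [CompleteSpace X] [TopologicalSpace.SeparableSpace X]
    (h : ∃ (c : X) (r : ℝ), ¬ IsCompact (Metric.closedBall c r)) :
    ¬ ∃ D : Set (X → ℝ), D.Countable ∧ (∀ g ∈ D, IsKatetov g) ∧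
      ∀ f : X → ℝ, IsKatetov f → ∀ ε > (0 : ℝ),
        ∃ g ∈ D, (⨆ x : X, |f x - g x|) < ε := by
  classical
  rintro ⟨D, hDc, hDk, hDd⟩
  obtain ⟨c, r, hcr⟩ := h
  -- the closed ball is complete, hence not totally bounded
  have hcomplete : IsComplete (Metric.closedBall c r) :=
    Metric.isClosed_closedBall.isComplete
  have hnt : ¬ TotallyBounded (Metric.closedBall c r) := fun htb =>
    hcr (isCompact_iff_totallyBounded_isComplete.2 ⟨htb, hcomplete⟩)
  rw [Metric.totallyBounded_iff] at hnt
  push_neg at hnt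
  obtain ⟨ε, hε, hsep⟩ := hnt
  -- a point of the ball ε-far from any finite set
  have key : ∀ t : Finset X, ∃ z, z ∈ Metric.closedBall c r ∧ ∀ y ∈ t, ε ≤ dist y z := by
    intro t
    obtain ⟨z, hz1, hz2⟩ := Set.not_subset.1 (hsep ↑t t.finite_toSet)
    refine ⟨z, hz1, fun y hy => ?_⟩
    by_contra hlt
    refine hz2 (Set.mem_biUnion hy ?_)
    rw [Metric.mem_ball, dist_comm]
    linarith
  choose F hF1 hF2 using key
  -- an ε-separated sequence in the ball
  let L : ℕ → Finset X := fun n => Nat.rec ∅ (fun _ t => insert (F t) t) n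
  let x : ℕ → X := fun n => F (L n)
  have hLsucc : ∀ n, L (n + 1) = insert (x n) (L n) := fun n => rfl
  have hxball : ∀ n, x n ∈ Metric.closedBall c r := fun n => hF1 (L n)
  have hmemL : ∀ m n, m < n → x m ∈ L n := by
    intro m n hmn
    induction n with
    | zero => omega
    | succ k ih =>
      rw [hLsucc k]
      rcases Nat.lt_succ_iff_lt_or_eq.1 hmn with h' | h'
      · exact Finset.mem_insert_of_mem (ih h')
      · subst h'; exact Finset.mem_insert_self _ _
  have hxsep : ∀ m n, m < n → ε ≤ dist (x m) (x n) := fun m n hmn =>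
    hF2 (L n) (x m) (hmemL m n hmn)
  have hxsep' : ∀ m n, m ≠ n → ε ≤ dist (x m) (x n) := by
    intro m n hmn
    rcases hmn.lt_or_gt with h' | h'
    · exact hxsep m n h'
    · rw [dist_comm]; exact hxsep n m h'
  have hr : 0 ≤ r := le_trans dist_nonneg (Metric.mem_closedBall.1 (hxball 0))
  -- distances between the points are ≤ 2r
  have hdist2r : ∀ m n, dist (x m) (x n) ≤ 2 * r := by
    intro m n
    have h1 := Metric.mem_closedBall.1 (hxball m)
    have h2 := Metric.mem_closedBall.1 (hxball n)
    have := dist_triangle (x m) c (x n)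
    rw [dist_comm c (x n)] at this
    linarith
  -- the family of Katetov maps indexed by subsets of ℕ
  set a : Set ℕ → ℕ → ℝ := fun S n => if n ∈ S then 2 * r else 2 * r + ε / 2 with ha
  have ha_lb : ∀ S n, 2 * r ≤ a S n := by
    intro S n; simp only [ha]; split <;> linarith
  have ha_ub : ∀ S n, a S n ≤ 2 * r + ε / 2 := by
    intro S n; simp only [ha]; split <;> linarith
  have ha_nonneg : ∀ S n, 0 ≤ a S n := fun S n => le_trans (by linarith) (ha_lb S n)
  set f : Set ℕ → X → ℝ := fun S p => ⨅ n, (a S n + dist p (x n)) with hf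
  have hbdd : ∀ S p, BddBelow (Set.range fun n => a S n + dist p (x n)) := by
    intro S p
    refine ⟨0, fun v hv => ?_⟩
    obtain ⟨n, rfl⟩ := hv
    have h1 := ha_nonneg S n
    have h2 := dist_nonneg (x := p) (y := x n)
    show (0:ℝ) ≤ a S n + dist p (x n)
    linarith
  have hfle : ∀ S p n, f S p ≤ a S n + dist p (x n) := fun S p n =>
    ciInf_le (hbdd S p) n
  have hfge : ∀ (S : Set ℕ) (p : X) (b : ℝ),
      (∀ n, b ≤ a S n + dist p (x n)) → b ≤ f S p := by
    intro S p b hb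
    exact le_ciInf hb
  -- each f S is Katetov
  have hKat : ∀ S, IsKatetov (f S) := by
    intro S p q
    constructor
    · rw [abs_sub_le_iff]
      constructor
      · have : f S p - dist p q ≤ f S q := by
          refine hfge S q _ fun n => ?_
          have := hfle S p n
          have := dist_triangle p q (x n)
          linarith
        linarith
      · have : f S q - dist p q ≤ f S p := by
          refine hfge S p _ fun n => ?_
          have := hfle S q n
          have := dist_triangle q p (x n)
          have := dist_comm p q
          linarith
        linarith
    · have step : ∀ m, dist p q - (a S m + dist p (x m)) ≤ f S q := by
        intro m
        refine hfge S q _ fun n => ?_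
        have h1 := dist_triangle p (x m) (x n)
        have h2 := dist_triangle p (x n) q
        have h3 := hdist2r m n
        have h4 := ha_lb S m
        have h5 := ha_lb S n
        have h6 := dist_comm (x n) q
        linarith
      have : dist p q - f S q ≤ f S p := by
        refine hfge S p _ fun m => ?_
        have := step m
        linarith
      linarith
  -- values at the points x n
  have hval_mem : ∀ S n, n ∈ S → f S (x n) ≤ 2 * r := by
    intro S n hn
    have := hfle S (x n) n
    rw [dist_self] at this
    simpa [ha, hn] using this
  have hval_not : ∀ S n, n ∉ S → 2 * r + ε / 2 ≤ f S (x n) := by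
    intro S n hn
    refine le_ciInf fun m => ?_
    rcases eq_or_ne m n with rfl | hne
    · simp [ha, hn]
    · have h1 := ha_lb S m
      have h2 := hxsep' n m (Ne.symm hne)
      linarith
  -- separation between f S and f T when S ≠ T
  have hsepval : ∀ S T n, n ∈ S → n ∉ T → ε / 2 ≤ |f S (x n) - f T (x n)| := by
    intro S T n hnS hnT
    have h1 := hval_mem S n hnS
    have h2 := hval_not T n hnT
    rw [abs_sub_comm, le_abs]
    left; linarith
  -- bounded above sup
  have hbddAbove : ∀ (u v : X → ℝ), IsKatetov u → IsKatetov v →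
      BddAbove (Set.range fun p => |u p - v p|) := by
    intro u v hu hv
    refine ⟨u (x 0) + v (x 0), fun w hw => ?_⟩
    obtain ⟨p, rfl⟩ := hw
    exact katetov_abs_sub_le hu hv (x 0) p
  -- the density assumption gives a map Set ℕ → D
  have hchoice : ∀ S : Set ℕ, ∃ g ∈ D, (⨆ p : X, |f S p - g p|) < ε / 8 := by
    intro S
    exact hDd (f S) (hKat S) (ε / 8) (by linarith)
  choose G hG1 hG2 using hchoice
  -- it cannot be injective
  have hGnotinj : ¬ Function.Injective G := by
    intro hinj
    have : Function.Injective (fun S : Set ℕ => (⟨G S, hG1 S⟩ : D)) := by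
      intro S T hST
      exact hinj (congrArg Subtype.val hST)
    haveI hcnt : Countable D := hDc.to_subtype
    have hcnt2 : Countable (Set ℕ) := this.countable
    obtain ⟨j, hj⟩ := @Countable.exists_injective_nat (Set ℕ) hcnt2
    exact Function.cantor_injective j hj
  obtain ⟨S, T, hST, hSTne⟩ := Function.not_injective_iff.1 hGnotinj
  -- a point where S and T differ
  have : ∃ n, (n ∈ S ∧ n ∉ T) ∨ (n ∈ T ∧ n ∉ S) := by
    by_contra hcon
    push_neg at hcon
    apply hSTne
    ext n
    have := hcon n
    tauto
  obtain ⟨n, hn⟩ := this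
  -- derive the contradiction
  have hg := hG1 S
  have hgK := hDk (G S) hg
  have b1 : |f S (x n) - G S (x n)| < ε / 8 := by
    have := le_ciSup (hbddAbove (f S) (G S) (hKat S) hgK) (x n)
    exact lt_of_le_of_lt this (hG2 S)
  have b2 : |f T (x n) - G S (x n)| < ε / 8 := by
    have := le_ciSup (hbddAbove (f T) (G S) (hKat T) (hST ▸ hgK)) (x n)
    have h' := hG2 T
    rw [← hST] at h'
    exact lt_of_le_of_lt this h'
  have hfar : ε / 2 ≤ |f S (x n) - f T (x n)| := by
    rcases hn with ⟨h1, h2⟩ | ⟨h1, h2⟩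
    · exact hsepval S T n h1 h2
    · rw [abs_sub_comm]; exact hsepval T S n h1 h2
  have : |f S (x n) - f T (x n)| ≤ |f S (x n) - G S (x n)| + |f T (x n) - G S (x n)| := by
    have := abs_sub_abs_le_abs_sub (f S (x n)) (f T (x n))
    calc |f S (x n) - f T (x n)|
        = |(f S (x n) - G S (x n)) - (f T (x n) - G S (x n))| := by ring_nf
      _ ≤ |f S (x n) - G S (x n)| + |f T (x n) - G S (x n)| := abs_sub _ _
  linarith
end

section
/- Let (xᵢ)_{i∈ℕ} be a sequence in a metric space with ε ≤ d(xᵢ,xⱼ) ≤ M for all i ≠ j, where 0 < ε ≤ M. For A ⊆ ℕ define f_A(xᵢ) = M if i ∉ A and f_A(xᵢ) = M + ε if i ∈ A. Then each f_A is a Katetov map on {xᵢ}, and d(f_A, f_B) = ε whenever A ≠ B; consequently E({xᵢ : i ∈ ℕ}) is not separable. -/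
/-- If `ε ≤ d(xᵢ,xⱼ) ≤ M` for `i ≠ j`, then the maps `f_A` (`A ⊆ ℕ`), with value
`M + ε` on `xᵢ` for `i ∈ A` and `M` elsewhere, are Katetov maps on `{xᵢ}` at
pairwise sup-distance `ε`; consequently `E({xᵢ})` is not separable. -/
theorem katetov_maps_from_separated_sequence (X : Type*) [MetricSpace X]
    (x : ℕ → X) (ε M : ℝ) (hε : 0 < ε) (hεM : ε ≤ M)
    (hsep : ∀ i j, i ≠ j → ε ≤ dist (x i) (x j) ∧ dist (x i) (x j) ≤ M)
    (g : Set ℕ → ℕ → ℝ)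
    (hg : ∀ (A : Set ℕ) (i : ℕ), (i ∈ A → g A i = M + ε) ∧ (i ∉ A → g A i = M)) :
    (∀ A : Set ℕ, ∀ i j, |g A i - g A j| ≤ dist (x i) (x j) ∧
        dist (x i) (x j) ≤ g A i + g A j) ∧
      (∀ A B : Set ℕ, A ≠ B → (⨆ i : ℕ, |g A i - g B i|) = ε) ∧
      ¬ ∃ D : Set (ℕ → ℝ), D.Countable ∧
          (∀ h ∈ D, ∀ i j, |h i - h j| ≤ dist (x i) (x j) ∧
            dist (x i) (x j) ≤ h i + h j) ∧
          ∀ h : ℕ → ℝ, (∀ i j, |h i - h j| ≤ dist (x i) (x j) ∧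
              dist (x i) (x j) ≤ h i + h j) →
            ∀ δ > (0 : ℝ), ∃ h' ∈ D, (⨆ i : ℕ, |h i - h' i|) < δ := by
  have hlb : ∀ A i, M ≤ g A i := by
    intro A i
    by_cases h : i ∈ A
    · rw [(hg A i).1 h]; linarith
    · rw [(hg A i).2 h]
  have hub : ∀ A i, g A i ≤ M + ε := by
    intro A i
    by_cases h : i ∈ A
    · rw [(hg A i).1 h]
    · rw [(hg A i).2 h]; linarith
  have kat : ∀ A : Set ℕ, ∀ i j, |g A i - g A j| ≤ dist (x i) (x j) ∧
      dist (x i) (x j) ≤ g A i + g A j := by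
    intro A i j
    rcases eq_or_ne i j with rfl | hij
    · simp only [sub_self, abs_zero, dist_self]
      exact ⟨le_refl 0, by linarith [hlb A i]⟩
    · obtain ⟨h1, h2⟩ := hsep i j hij
      constructor
      · rw [abs_sub_le_iff]
        constructor <;> linarith [hlb A i, hub A i, hlb A j, hub A j]
      · linarith [hlb A i, hlb A j]
  have hdiff : ∀ A B : Set ℕ, ∀ i, |g A i - g B i| ≤ ε := by
    intro A B i
    rw [abs_sub_le_iff]
    constructor <;> linarith [hlb A i, hub A i, hlb B i, hub B i]
  have hsup : ∀ A B : Set ℕ, A ≠ B → (⨆ i : ℕ, |g A i - g B i|) = ε := by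
    intro A B hAB
    have hbdd : BddAbove (Set.range fun i => |g A i - g B i|) := by
      refine ⟨ε, ?_⟩
      rintro _ ⟨i, rfl⟩
      exact hdiff A B i
    obtain ⟨i, hi⟩ : ∃ i, ¬(i ∈ A ↔ i ∈ B) := by
      by_contra h
      push_neg at h
      exact hAB (Set.ext h)
    have hval : |g A i - g B i| = ε := by
      by_cases hiA : i ∈ A <;> by_cases hiB : i ∈ B
      · exact absurd (iff_of_true hiA hiB) hi
      · rw [(hg A i).1 hiA, (hg B i).2 hiB, abs_of_nonneg (by linarith)]; ring
      · rw [(hg A i).2 hiA, (hg B i).1 hiB, abs_of_nonpos (by linarith)]; ring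
      · exact absurd (iff_of_false hiA hiB) hi
    refine le_antisymm (ciSup_le fun i => hdiff A B i) ?_
    calc ε = |g A i - g B i| := hval.symm
    _ ≤ _ := le_ciSup hbdd i
  refine ⟨kat, hsup, ?_⟩
  rintro ⟨D, hDcount, hDkat, hDapprox⟩
  have hchoice : ∀ A : Set ℕ, ∃ h' ∈ D, (⨆ i, |g A i - h' i|) < ε / 2 :=
    fun A => hDapprox (g A) (kat A) (ε / 2) (by linarith)
  choose F hFD hFclose using hchoice
  -- F is not injective since Set ℕ is uncountable and D is countable
  have hninj : ¬ Function.Injective F := by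
    intro hinj
    have h1 : (F ⁻¹' D).Countable := hDcount.preimage hinj
    have h2 : F ⁻¹' D = Set.univ := Set.eq_univ_of_forall fun A => hFD A
    rw [h2, Set.countable_univ_iff] at h1
    obtain ⟨f, hf⟩ := (countable_iff_exists_injective (Set ℕ)).mp h1
    exact Function.cantor_injective f hf
  obtain ⟨A, B, hFAB, hAB⟩ : ∃ A B, F A = F B ∧ A ≠ B := by
    by_contra h
    push_neg at h
    exact hninj fun A B hab => h A B hab
  -- bound on Katetov maps: |h i| ≤ |h 0| + M
  have hkatbd : ∀ h : ℕ → ℝ, (∀ i j, |h i - h j| ≤ dist (x i) (x j) ∧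
      dist (x i) (x j) ≤ h i + h j) → ∀ i, |h i| ≤ |h 0| + M := by
    intro h hh i
    rcases eq_or_ne i 0 with rfl | hi0
    · linarith [abs_nonneg (h 0)]
    · have := (hh i 0).1
      have := (hsep i 0 hi0).2
      calc |h i| = |h i - h 0 + h 0| := by ring_nf
      _ ≤ |h i - h 0| + |h 0| := abs_add_le _ _
      _ ≤ |h 0| + M := by linarith
  have hFbd := hkatbd (F B) (hDkat (F B) (hFD B))
  have bdd : ∀ C : Set ℕ, BddAbove (Set.range fun i => |g C i - F B i|) := by
    intro C
    refine ⟨(M + ε) + (|F B 0| + M), ?_⟩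
    rintro _ ⟨i, rfl⟩
    calc |g C i - F B i| ≤ |g C i| + |F B i| := abs_sub _ _
    _ ≤ (M + ε) + (|F B 0| + M) := by
        have := hFbd i
        have h1 : |g C i| ≤ M + ε := abs_le.mpr ⟨by linarith [hlb C i], hub C i⟩
        linarith
  have hclA := hFclose A
  rw [hFAB] at hclA
  have hclB := hFclose B
  have key : ε ≤ (⨆ i, |g A i - F B i|) + ⨆ i, |g B i - F B i| := by
    rw [← hsup A B hAB]
    refine ciSup_le fun i => ?_
    calc |g A i - g B i| = |(g A i - F B i) - (g B i - F B i)| := by ring_nf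
    _ ≤ |g A i - F B i| + |g B i - F B i| := abs_sub _ _
    _ ≤ _ := add_le_add (le_ciSup (bdd A) i) (le_ciSup (bdd B) i)
  linarith
end

section
/- For X = ℕ with the metric d(n,m) = |n − m|, the set of Katetov maps that are Katetov extensions of their restriction to some finite initial segment is dense in E(ℕ); in particular, E(ℕ) is separable. More precisely: for every Katetov map f on ℕ, the sequence (f_i), where f_i is the Katetov extension of f restricted to {0,1,…,i}, converges uniformly to f. -/
open Filter

/-- `f` is a Katetov map on `ℕ` with the metric `d(n,m) = |n - m|`. -/
def IsKatetovNat (f : ℕ → ℝ) : Prop :=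
  ∀ n m : ℕ, |f n - f m| ≤ |(n : ℝ) - m| ∧ |(n : ℝ) - m| ≤ f n + f m

private lemma bddBelow_ext {k : ℕ} (w : Fin k → ℝ) : BddBelow (Set.range w) :=
  (Set.finite_range w).bddBelow

private lemma katetov_part1 (f : ℕ → ℝ) (hf : IsKatetovNat f) :
    TendstoUniformly (fun (i : ℕ) (n : ℕ) => ⨅ s : Fin (i + 1), (f s + |(n : ℝ) - (s : ℕ)|))
      f Filter.atTop := by
  set g : ℕ → ℝ := fun n => f n - n with hgdef
  have hbd : ∀ n : ℕ, -f 0 ≤ g n := by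
    intro n
    have h := (hf n 0).2
    have h0 : |(n : ℝ) - (0 : ℕ)| = n := by
      simp [abs_of_nonneg]
    rw [h0] at h
    simp only [hgdef]
    linarith
  have hanti : Antitone g := by
    refine antitone_nat_of_succ_le fun n => ?_
    have h := (hf (n + 1) n).1
    have h1 : |((n + 1 : ℕ) : ℝ) - n| = 1 := by push_cast; simp
    rw [h1] at h
    have := (abs_le.mp h).2
    simp only [hgdef]
    push_cast
    linarith
  have hbdd : BddBelow (Set.range g) := ⟨-f 0, by rintro x ⟨n, rfl⟩; exact hbd n⟩
  set L : ℝ := ⨅ n, g n with hLdef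
  have htends : Tendsto g atTop (nhds L) := tendsto_atTop_ciInf hanti hbdd
  rw [Metric.tendstoUniformly_iff]
  intro ε hε
  have hev : ∀ᶠ i in atTop, g i < L + ε := htends.eventually_lt_const (by linarith)
  filter_upwards [hev] with i hi n
  have hlow : f n ≤ ⨅ s : Fin (i + 1), (f s + |(n : ℝ) - (s : ℕ)|) := by
    refine le_ciInf fun s => ?_
    have h := (le_abs_self (f n - f s)).trans ((hf n s).1)
    linarith
  have hLle : L ≤ g n := ciInf_le hbdd n
  rw [Real.dist_eq, abs_sub_comm, abs_of_nonneg (by linarith)]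
  rcases le_or_gt n i with hni | hni
  · have hup : (⨅ s : Fin (i + 1), (f s + |(n : ℝ) - (s : ℕ)|)) ≤ f n := by
      have := ciInf_le (bddBelow_ext (fun s : Fin (i + 1) => f s + |(n : ℝ) - (s : ℕ)|))
        (⟨n, by omega⟩ : Fin (i + 1))
      simpa using this
    linarith
  · have hup : (⨅ s : Fin (i + 1), (f s + |(n : ℝ) - (s : ℕ)|)) ≤ f i + ((n : ℝ) - i) := by
      have h := ciInf_le (bddBelow_ext (fun s : Fin (i + 1) => f s + |(n : ℝ) - (s : ℕ)|))
        (⟨i, by omega⟩ : Fin (i + 1))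
      have habs : |(n : ℝ) - (i : ℕ)| = (n : ℝ) - i := by
        rw [abs_of_nonneg]
        simp only [sub_nonneg]
        exact_mod_cast hni.le
      simpa [habs] using h
    have hgi : g i = f i - i := rfl
    have hgn : g n = f n - n := rfl
    linarith

/-- For every Katetov map `f` on `ℕ`, the Katetov extensions of the restrictions of
`f` to the initial segments `{0,…,i}` converge uniformly to `f`; in particular
`E(ℕ)` is separable. -/
theorem katetov_nat_initial_segments_dense :
    (∀ f : ℕ → ℝ, IsKatetovNat f →
      TendstoUniformly (fun (i : ℕ) (n : ℕ) => ⨅ s : Fin (i + 1), (f s + |(n : ℝ) - (s : ℕ)|))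
        f Filter.atTop) ∧
    ∃ D : Set (ℕ → ℝ), D.Countable ∧ (∀ g ∈ D, IsKatetovNat g) ∧
      ∀ f : ℕ → ℝ, IsKatetovNat f → ∀ ε > (0 : ℝ),
        ∃ g ∈ D, (⨆ n : ℕ, |f n - g n|) < ε := by
  classical
  refine ⟨katetov_part1, ?_⟩
  refine ⟨⋃ i : ℕ,
      (fun q : Fin (i + 1) → ℚ => fun n : ℕ => ⨅ s : Fin (i + 1), ((q s : ℝ) + |(n : ℝ) - (s : ℕ)|)) ''
      {q : Fin (i + 1) → ℚ |
        ∀ s t : Fin (i + 1), |((s : ℕ) : ℝ) - ((t : ℕ) : ℝ)| ≤ (q s : ℝ) + (q t : ℝ)},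
      ?_, ?_, ?_⟩
  · exact Set.countable_iUnion fun i => (Set.to_countable _).image _
  · intro g hg
    simp only [Set.mem_iUnion, Set.mem_image, Set.mem_setOf_eq] at hg
    obtain ⟨i, q, hq, rfl⟩ := hg
    have claim : ∀ (a : ℕ) (t : Fin (i + 1)),
        |(a : ℝ) - (t : ℕ)| - (q t : ℝ) ≤ ⨅ s : Fin (i + 1), ((q s : ℝ) + |(a : ℝ) - (s : ℕ)|) := by
      intro a t
      refine le_ciInf fun s => ?_
      have h1 := hq s t
      have h2 := abs_sub_le (a : ℝ) ((s : ℕ) : ℝ) ((t : ℕ) : ℝ)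
      linarith
    have key : ∀ a b : ℕ,
        (⨅ s : Fin (i + 1), ((q s : ℝ) + |(a : ℝ) - (s : ℕ)|)) ≤
        (⨅ s : Fin (i + 1), ((q s : ℝ) + |(b : ℝ) - (s : ℕ)|)) + |(a : ℝ) - b| := by
      intro a b
      rw [← sub_le_iff_le_add]
      refine le_ciInf fun t => ?_
      have h1 := ciInf_le (bddBelow_ext (fun s : Fin (i + 1) => (q s : ℝ) + |(a : ℝ) - (s : ℕ)|)) t
      have h2 := abs_sub_le (a : ℝ) (b : ℝ) ((t : ℕ) : ℝ)
      linarith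
    intro n m
    dsimp only
    constructor
    · rw [abs_sub_le_iff]
      refine ⟨by linarith [key n m], ?_⟩
      have := key m n
      rw [abs_sub_comm] at this
      linarith
    · have h1 : |(n : ℝ) - m| - (⨅ s : Fin (i + 1), ((q s : ℝ) + |(n : ℝ) - (s : ℕ)|)) ≤
          ⨅ s : Fin (i + 1), ((q s : ℝ) + |(m : ℝ) - (s : ℕ)|) := by
        refine le_ciInf fun t => ?_
        have h2 := claim n t
        have h3 := abs_sub_le (n : ℝ) ((t : ℕ) : ℝ) (m : ℝ)
        have h4 := abs_sub_comm ((t : ℕ) : ℝ) (m : ℝ)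
        linarith
      linarith
  · intro f hf ε hε
    have h1 := katetov_part1 f hf
    rw [Metric.tendstoUniformly_iff] at h1
    obtain ⟨i, hi⟩ := (h1 (ε / 3) (by linarith)).exists
    choose q hq1 hq2 using fun s : Fin (i + 1) =>
      exists_rat_btwn (show f s < f s + ε / 3 by linarith)
    refine ⟨fun n : ℕ => ⨅ s : Fin (i + 1), ((q s : ℝ) + |(n : ℝ) - (s : ℕ)|), ?_, ?_⟩
    · refine Set.mem_iUnion.2 ⟨i, Set.mem_image_of_mem _ ?_⟩
      intro s t
      have h := (hf s t).2
      linarith [hq1 s, hq1 t]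
    · have key : ∀ n : ℕ,
          |f n - (fun n : ℕ => ⨅ s : Fin (i + 1), ((q s : ℝ) + |(n : ℝ) - (s : ℕ)|)) n| ≤
            2 * ε / 3 := by
        intro n
        dsimp only
        set A : ℝ := ⨅ s : Fin (i + 1), (f s + |(n : ℝ) - (s : ℕ)|) with hA
        have hlow : f n ≤ A := by
          refine le_ciInf fun s => ?_
          have h := (le_abs_self (f n - f s)).trans ((hf n s).1)
          linarith
        have hd : |f n - A| < ε / 3 := by
          have := hi n
          simpa [Real.dist_eq, hA] using this
        have hAfn : A - f n < ε / 3 := by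
          have := (abs_lt.mp hd).1
          linarith
        have hAg : A ≤ ⨅ s : Fin (i + 1), ((q s : ℝ) + |(n : ℝ) - (s : ℕ)|) := by
          refine le_ciInf fun s => ?_
          have h := ciInf_le (bddBelow_ext (fun s : Fin (i + 1) => f s + |(n : ℝ) - (s : ℕ)|)) s
          have := hq1 s
          rw [← hA] at h
          linarith
        have hgA : (⨅ s : Fin (i + 1), ((q s : ℝ) + |(n : ℝ) - (s : ℕ)|)) - ε / 3 ≤ A := by
          rw [hA]
          refine le_ciInf fun s => ?_
          have h := ciInf_le
            (bddBelow_ext (fun s : Fin (i + 1) => (q s : ℝ) + |(n : ℝ) - (s : ℕ)|)) s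
          have := hq2 s
          linarith
        rw [abs_sub_comm, abs_of_nonneg (by linarith)]
        linarith
      calc (⨆ n : ℕ, |f n - (fun n : ℕ => ⨅ s : Fin (i + 1), ((q s : ℝ) + |(n : ℝ) - (s : ℕ)|)) n|)
          ≤ 2 * ε / 3 := ciSup_le key
        _ < ε := by linarith
end

section
/- The space E(ℝ²) of Katetov maps on the Euclidean plane, with the sup metric, is not separable. -/
noncomputable section KatetovAux

/-- The points `p n = (4·4^n, 9·2^n)` in the Euclidean plane. -/
noncomputable def KPt (n : ℕ) : EuclideanSpace ℝ (Fin 2) :=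
  (WithLp.equiv 2 (Fin 2 → ℝ)).symm ![4 * 4 ^ n, 9 * 2 ^ n]

/-- Radii `r n = 4·4^n + 7`. -/
noncomputable def KR (n : ℕ) : ℝ := 4 * 4 ^ n + 7

lemma KR_nonneg (n : ℕ) : 0 ≤ KR n := by
  unfold KR; positivity

lemma four_pow_eq (n : ℕ) : (4 : ℝ) ^ n = ((2:ℝ) ^ n) ^ 2 := by
  rw [show (4:ℝ) = 2 ^ 2 by norm_num, ← pow_mul, mul_comm, pow_mul]

lemma KPt_dist (m n : ℕ) :
    dist (KPt m) (KPt n)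
      = Real.sqrt ((4 * 4 ^ m - 4 * 4 ^ n) ^ 2 + (9 * 2 ^ m - 9 * 2 ^ n) ^ 2) := by
  rw [EuclideanSpace.dist_eq]
  congr 1
  rw [Fin.sum_univ_two]
  simp [KPt, Real.dist_eq, sq_abs]

lemma two_le_pow_ratio {m n : ℕ} (h : m < n) : 2 * (2:ℝ) ^ m ≤ 2 ^ n := by
  have : (2:ℝ) ^ (m+1) ≤ 2 ^ n := pow_le_pow_right₀ one_le_two h
  calc 2 * (2:ℝ) ^ m = 2 ^ (m+1) := by ring
    _ ≤ 2 ^ n := this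

lemma one_le_two_pow (m : ℕ) : (1:ℝ) ≤ 2 ^ m := one_le_pow₀ one_le_two

lemma Karith_ge (u v : ℝ) (huv : 2 * v ≤ u) (hv1 : 1 ≤ v) :
    4 * u ^ 2 + 7 + 2 ≤
      Real.sqrt ((4 * v ^ 2 - 4 * u ^ 2) ^ 2 + (9 * v - 9 * u) ^ 2) + (4 * v ^ 2 + 7) := by
  have hpos : (0:ℝ) ≤ 4 * u ^ 2 - 4 * v ^ 2 + 2 := by nlinarith
  have hkey : (4 * u ^ 2 - 4 * v ^ 2 + 2) ≤
      Real.sqrt ((4 * v ^ 2 - 4 * u ^ 2) ^ 2 + (9 * v - 9 * u) ^ 2) := by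
    rw [show (4 * u ^ 2 - 4 * v ^ 2 + 2) = Real.sqrt ((4 * u ^ 2 - 4 * v ^ 2 + 2) ^ 2) from
      (Real.sqrt_sq hpos).symm]
    apply Real.sqrt_le_sqrt
    nlinarith [sq_nonneg (u - 2 * v),
      mul_nonneg (sub_nonneg.mpr huv) (by linarith : (0:ℝ) ≤ v),
      mul_nonneg (sub_nonneg.mpr huv) (by linarith : (0:ℝ) ≤ u)]
  linarith

lemma Karith_le (u v : ℝ) (hvu : v ≤ u) (hv1 : 1 ≤ v) :
    Real.sqrt ((4 * v ^ 2 - 4 * u ^ 2) ^ 2 + (9 * v - 9 * u) ^ 2) ≤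
      (4 * v ^ 2 + 7) + (4 * u ^ 2 + 7) := by
  have hR : (0:ℝ) ≤ (4 * v ^ 2 + 7) + (4 * u ^ 2 + 7) := by positivity
  rw [show (4 * v ^ 2 + 7) + (4 * u ^ 2 + 7)
      = Real.sqrt (((4 * v ^ 2 + 7) + (4 * u ^ 2 + 7)) ^ 2) from (Real.sqrt_sq hR).symm]
  apply Real.sqrt_le_sqrt
  nlinarith [sq_nonneg (u - v), sq_nonneg (u + v), sq_nonneg (u * v),
    mul_nonneg (sub_nonneg.mpr hvu) (by linarith : (0:ℝ) ≤ v),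
    mul_nonneg (sub_nonneg.mpr hvu) (by linarith : (0:ℝ) ≤ u)]

/-- Lower separation: for `m < n`, `r n + 2 ≤ d(p m, p n) + r m`. -/
lemma KPt_dist_ge {m n : ℕ} (h : m < n) :
    KR n + 2 ≤ dist (KPt m) (KPt n) + KR m := by
  unfold KR
  rw [KPt_dist, four_pow_eq n, four_pow_eq m]
  exact Karith_ge (2 ^ n) (2 ^ m) (two_le_pow_ratio h) (one_le_two_pow m)

lemma KPt_dist_le_aux {m n : ℕ} (h : m ≤ n) :
    dist (KPt m) (KPt n) ≤ KR m + KR n := by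
  unfold KR
  rw [KPt_dist, four_pow_eq n, four_pow_eq m]
  exact Karith_le (2 ^ n) (2 ^ m) (pow_le_pow_right₀ one_le_two h) (one_le_two_pow m)

lemma KPt_dist_le (m n : ℕ) : dist (KPt m) (KPt n) ≤ KR m + KR n := by
  rcases le_total m n with h | h
  · exact KPt_dist_le_aux h
  · rw [dist_comm, add_comm]; exact KPt_dist_le_aux h

open Classical in
/-- Index selector: `n+1` if `n ∈ S`, else `0`. -/
noncomputable def KIdx (S : Set ℕ) (n : ℕ) : ℕ := if n ∈ S then n + 1 else 0

/-- The Katetov map associated to `S ⊆ ℕ`. -/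
noncomputable def KF (S : Set ℕ) (x : EuclideanSpace ℝ (Fin 2)) : ℝ :=
  ⨅ n : ℕ, (dist x (KPt (KIdx S n)) + KR (KIdx S n))

lemma KF_bdd (S : Set ℕ) (x : EuclideanSpace ℝ (Fin 2)) :
    BddBelow (Set.range fun n : ℕ => dist x (KPt (KIdx S n)) + KR (KIdx S n)) := by
  refine ⟨0, ?_⟩
  rintro _ ⟨n, rfl⟩
  dsimp only
  have := KR_nonneg (KIdx S n)
  have := dist_nonneg (x := x) (y := KPt (KIdx S n))
  linarith

lemma KF_le (S : Set ℕ) (x : EuclideanSpace ℝ (Fin 2)) (n : ℕ) :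
    KF S x ≤ dist x (KPt (KIdx S n)) + KR (KIdx S n) :=
  ciInf_le (KF_bdd S x) n

lemma KF_lip (S : Set ℕ) (a b : EuclideanSpace ℝ (Fin 2)) :
    KF S a - KF S b ≤ dist a b := by
  have h : KF S a - dist a b ≤ KF S b := by
    apply le_ciInf
    intro n
    have h1 := KF_le S a n
    have tri := dist_triangle a b (KPt (KIdx S n))
    linarith
  linarith

lemma KF_katetov (S : Set ℕ) : IsKatetov (KF S) := by
  intro a b
  constructor
  · rw [abs_sub_le_iff]
    refine ⟨KF_lip S a b, ?_⟩
    rw [dist_comm]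
    exact KF_lip S b a
  · have h1 : dist a b - KF S b ≤ KF S a := by
      apply le_ciInf
      intro m
      have h2 : dist a b - (dist a (KPt (KIdx S m)) + KR (KIdx S m)) ≤ KF S b := by
        apply le_ciInf
        intro n
        have ht := dist_triangle4 a (KPt (KIdx S m)) (KPt (KIdx S n)) b
        have hcross := KPt_dist_le (KIdx S m) (KIdx S n)
        linarith [dist_comm a (KPt (KIdx S m)), dist_comm b (KPt (KIdx S n))]
      linarith
    linarith

lemma KR_strict {m n : ℕ} (h : m < n) : KR m + 2 ≤ KR n := by
  unfold KR
  have : (4:ℝ) ^ (m+1) ≤ 4 ^ n := pow_le_pow_right₀ (by norm_num) h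
  have h1 : (1:ℝ) ≤ 4 ^ m := one_le_pow₀ (by norm_num)
  have : (4:ℝ) ^ m * 4 ≤ 4 ^ n := by rw [← pow_succ]; exact this
  linarith

lemma KF_le_at {S : Set ℕ} {n : ℕ} (h : n ∈ S) : KF S (KPt (n+1)) ≤ KR (n+1) := by
  have h1 := KF_le S (KPt (n+1)) n
  rw [KIdx, if_pos h] at h1
  simpa using h1

lemma KF_ge_at {T : Set ℕ} {n : ℕ} (h : n ∉ T) : KR (n+1) + 2 ≤ KF T (KPt (n+1)) := by
  apply le_ciInf
  intro m
  have hj : KIdx T m ≠ n + 1 := by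
    unfold KIdx
    split
    · next hm =>
        intro hc
        have hmn : m = n := by omega
        exact h (hmn ▸ hm)
    · omega
  rcases lt_or_gt_of_ne hj with hlt | hgt
  · have := KPt_dist_ge hlt
    rw [dist_comm] at this
    linarith
  · have h1 := KR_strict hgt
    have h2 := dist_nonneg (x := KPt (n+1)) (y := KPt (KIdx T m))
    linarith

lemma katetov_abs_bdd {f g : EuclideanSpace ℝ (Fin 2) → ℝ}
    (hf : IsKatetov f) (hg : IsKatetov g) :
    BddAbove (Set.range fun x => |f x - g x|) := by
  refine ⟨f 0 + g 0, ?_⟩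
  rintro _ ⟨x, rfl⟩
  dsimp only
  obtain ⟨hf1, hf2⟩ := hf x 0
  obtain ⟨hg1, hg2⟩ := hg x 0
  rw [abs_sub_le_iff] at hf1 hg1 ⊢
  constructor
  · linarith [hf1.1, hg2]
  · linarith [hg1.1, hf2]

end KatetovAux

/-- `E(ℝ²)`, the space of Katetov maps on the Euclidean plane with the sup metric,
is not separable. -/
theorem katetov_euclidean_plane_not_separable :
    ¬ ∃ D : Set (EuclideanSpace ℝ (Fin 2) → ℝ), D.Countable ∧
        (∀ g ∈ D, IsKatetov g) ∧
        ∀ f : EuclideanSpace ℝ (Fin 2) → ℝ, IsKatetov f → ∀ ε > (0 : ℝ),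
          ∃ g ∈ D, (⨆ x : EuclideanSpace ℝ (Fin 2), |f x - g x|) < ε := by
  rintro ⟨D, hDc, hDk, happ⟩
  choose g hgD hg using fun S : Set ℕ => happ (KF S) (KF_katetov S) 1 one_pos
  have hptwise : ∀ (S : Set ℕ) (x : EuclideanSpace ℝ (Fin 2)), |KF S x - g S x| < 1 := by
    intro S x
    exact lt_of_le_of_lt
      (le_ciSup (katetov_abs_bdd (KF_katetov S) (hDk _ (hgD S))) x) (hg S)
  have key : ∀ S T : Set ℕ, g S = g T → S ⊆ T := by
    intro S T hST n hnS
    by_contra hnT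
    have h1 : KF S (KPt (n+1)) ≤ KR (n+1) := KF_le_at hnS
    have h2 : KR (n+1) + 2 ≤ KF T (KPt (n+1)) := KF_ge_at hnT
    have b1 := hptwise S (KPt (n+1))
    have b2 := hptwise T (KPt (n+1))
    rw [hST] at b1
    rw [abs_lt] at b1 b2
    linarith [b1.1, b1.2, b2.1, b2.2]
  have hinj : Function.Injective fun S : Set ℕ => (⟨g S, hgD S⟩ : D) := by
    intro S T h
    have h' : g S = g T := congrArg Subtype.val h
    exact Set.Subset.antisymm (key S T h') (key T S h'.symm)
  have hcnt : Countable (Set ℕ) := by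
    have : Countable ↥D := hDc.to_subtype
    exact hinj.countable
  obtain ⟨f, hf⟩ := exists_injective_nat (Set ℕ)
  exact Function.cantor_injective f hf
end

section
/- Let X be a metric space in which every sequence admits an inline subsequence. Then every sequence in X admits a subsequence (uₙ) such that for all δ > 0 there is N with: for every n ≥ N there is i ≤ N with d(u₀,uₙ) ≥ d(u₀,uᵢ) + d(uᵢ,uₙ) − δ. (Equivalently, condition (d) of the characterization implies condition (c), second clause, of the theorem.) -/
/-- A sequence `u` is `ε`-good-inline if for every `r`,
`Σ_{i=0}^{r} d(uᵢ,uᵢ₊₁) ≤ d(u₀,u_{r+1}) + ε`. -/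
def GoodInline {X : Type*} [MetricSpace X] (ε : ℝ) (u : ℕ → X) : Prop :=
  ∀ r : ℕ, (∑ i ∈ Finset.range (r + 1), dist (u i) (u (i + 1))) ≤
    dist (u 0) (u (r + 1)) + ε

/-- A sequence is inline if for every `ε > 0` some tail of it is `ε`-good-inline. -/
def Inline {X : Type*} [MetricSpace X] (u : ℕ → X) : Prop :=
  ∀ ε > (0 : ℝ), ∃ N : ℕ, GoodInline ε (fun n => u (n + N))

lemma goodInline_triangle {X : Type*} [MetricSpace X] {ε : ℝ} (hε : 0 ≤ ε)
    {w : ℕ → X} (hw : GoodInline ε w) {i n : ℕ} (hin : i ≤ n) :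
    dist (w 0) (w i) + dist (w i) (w n) ≤ dist (w 0) (w n) + ε := by
  rcases Nat.eq_zero_or_pos n with hn | hn
  · subst hn
    obtain rfl : i = 0 := by omega
    simp [hε]
  · obtain ⟨r, hr⟩ : ∃ r, n = r + 1 := ⟨n - 1, by omega⟩
    have hsum := hw r
    rw [← hr] at hsum
    obtain ⟨k, hk⟩ : ∃ k, n = i + k := ⟨n - i, by omega⟩
    have h1 : dist (w 0) (w i) ≤ ∑ j ∈ Finset.range i, dist (w j) (w (j + 1)) :=
      dist_le_range_sum_dist w i
    have h2 : dist (w i) (w (i + k)) ≤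
        ∑ j ∈ Finset.range k, dist (w (i + j)) (w (i + j + 1)) := by
      simpa [← add_assoc] using dist_le_range_sum_dist (fun j => w (i + j)) k
    have h3 : ∑ j ∈ Finset.range (i + k), dist (w j) (w (j + 1)) =
        ∑ j ∈ Finset.range i, dist (w j) (w (j + 1)) +
          ∑ j ∈ Finset.range k, dist (w (i + j)) (w (i + j + 1)) :=
      Finset.sum_range_add (fun j => dist (w j) (w (j + 1))) i k
    rw [hk] at hsum ⊢
    linarith

/-- If every sequence in `X` admits an inline subsequence, then every sequence
admits a subsequence `(uₙ)` such that for all `δ > 0` there is `N` with: for every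
`n ≥ N` there is `i ≤ N` with `d(u₀,uₙ) ≥ d(u₀,uᵢ) + d(uᵢ,uₙ) − δ`. -/
theorem inline_subsequence_implies_triangle_condition (X : Type*) [MetricSpace X]
    (h : ∀ u : ℕ → X, ∃ s : ℕ → ℕ, StrictMono s ∧ Inline (u ∘ s)) :
    ∀ u : ℕ → X, ∃ s : ℕ → ℕ, StrictMono s ∧
      ∀ δ > (0 : ℝ), ∃ N : ℕ, ∀ n ≥ N, ∃ i ≤ N,
        dist (u (s 0)) (u (s i)) + dist (u (s i)) (u (s n)) - δ ≤
          dist (u (s 0)) (u (s n)) := by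
  intro u
  obtain ⟨s, hs, hinl⟩ := h u
  refine ⟨s, hs, ?_⟩
  intro δ hδ
  have hδ2 : (0 : ℝ) < δ / 2 := by linarith
  obtain ⟨M, hM⟩ := hinl (δ / 2) hδ2
  set v : ℕ → X := u ∘ s with hv
  set w : ℕ → X := fun n => v (n + M) with hwdef
  have hMw : GoodInline (δ / 2) w := hM
  set g : ℕ → ℝ := fun n => dist (v 0) (w n) - dist (w 0) (w n) with hg
  have hbdd : BddBelow (Set.range g) := by
    refine ⟨-dist (v 0) (w 0), ?_⟩
    rintro x ⟨n, rfl⟩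
    have t1 := dist_triangle (w 0) (v 0) (w n)
    have t2 : dist (w 0) (v 0) = dist (v 0) (w 0) := dist_comm _ _
    simp only [hg]
    linarith
  set L := ⨅ n, g n with hL
  have hex : ∃ i, g i < L + δ / 2 := exists_lt_of_ciInf_lt (by linarith)
  obtain ⟨i, hi⟩ := hex
  refine ⟨i + M, fun n hn => ⟨i + M, le_refl _, ?_⟩⟩
  obtain ⟨m, rfl⟩ : ∃ m, n = m + M := ⟨n - M, by omega⟩
  have him : i ≤ m := by omega
  have htri := goodInline_triangle hδ2.le hMw him
  have hgm : L ≤ g m := ciInf_le hbdd m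
  simp only [hg] at hi hgm
  show dist (v 0) (w i) + dist (w i) (w m) - δ ≤ dist (v 0) (w m)
  linarith
end

section
/- Let U be a nonempty complete finitely injective metric space, φ an isometry of U all of whose orbits are totally bounded, and suppose Fix(φ) is nonempty. Then Fix(φ), with the induced metric, has the approximate extension property: for all x₁,…,xₙ ∈ Fix(φ), every Katetov map f on {x₁,…,xₙ}, and every ε > 0, there is z ∈ Fix(φ) with |d(z,xᵢ) − f(xᵢ)| ≤ ε for all i. Consequently, if U is the Urysohn space then Fix(φ) is isometric to U. -/
namespace FixUry

variable {U : Type*} [MetricSpace U]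

/-- Fintype version of finite injectivity. -/
lemma finInj (hU : FinitelyInjective U) {ι : Type*} [Fintype ι] (x : ι → U) (f : ι → ℝ)
    (hf : ∀ i j, |f i - f j| ≤ dist (x i) (x j) ∧ dist (x i) (x j) ≤ f i + f j) :
    ∃ z : U, ∀ i, dist z (x i) = f i := by
  let e := Fintype.equivFin ι
  obtain ⟨z, hz⟩ := hU _ (x ∘ e.symm) (f ∘ e.symm) (fun i j => hf _ _)
  refine ⟨z, fun i => ?_⟩
  simpa using hz (e i)

variable (φ : U ≃ᵢ U)

lemma zpow_apply_add (m l : ℤ) (u : U) : (φ ^ m) ((φ ^ l) u) = (φ ^ (m + l)) u := by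
  rw [zpow_add]; rfl

lemma zpow_fixed {x : U} (h : φ x = x) (m : ℤ) : (φ ^ m) x = x := by
  have hs : φ.symm x = x := (IsometryEquiv.symm_apply_eq φ).mpr h.symm
  induction m using Int.induction_on with
  | zero => rfl
  | succ n ih => rw [add_comm, zpow_add, zpow_one]; show φ ((φ ^ (n : ℤ)) x) = x; rw [ih, h]
  | pred n ih =>
      rw [sub_eq_add_neg, add_comm, zpow_add]
      show (φ ^ (-1 : ℤ)) ((φ ^ (-n : ℤ)) x) = x
      rw [ih, zpow_neg_one]
      exact hs

lemma dist_zpow (m : ℤ) (a b : U) : dist ((φ ^ m) a) ((φ ^ m) b) = dist a b :=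
  (φ ^ m).isometry.dist_eq a b

/-- distance from a fixed point to an orbit point -/
lemma dist_fixed_zpow {x : U} (h : φ x = x) (m : ℤ) (u : U) :
    dist (x) ((φ ^ m) u) = dist x u := by
  conv_lhs => rw [← zpow_fixed φ h m]
  exact dist_zpow φ m x u

/-- pairwise distances inside an orbit -/
lemma dist_zpow_zpow (m l : ℤ) (u : U) :
    dist ((φ ^ m) u) ((φ ^ l) u) = dist ((φ ^ (m - l)) u) u := by
  rw [← dist_zpow φ (-l) ((φ ^ m) u) ((φ ^ l) u), zpow_apply_add, zpow_apply_add]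
  have h1 : -l + m = m - l := by ring
  have h2 : -l + l = 0 := by ring
  rw [h1, h2, zpow_zero]
  simp

/-- cross distances between two orbits -/
lemma dist_zpow_cross (m l : ℤ) (u w : U) :
    dist ((φ ^ m) u) ((φ ^ l) w) = dist u ((φ ^ (l - m)) w) := by
  rw [← dist_zpow φ (-m) ((φ ^ m) u) ((φ ^ l) w), zpow_apply_add, zpow_apply_add]
  have h1 : -m + m = 0 := by ring
  have h2 : -m + l = l - m := by ring
  rw [h1, h2, zpow_zero]
  simp


/-- extract a finite net inside a totally bounded set -/
lemma exists_net {s : Set U} (h : TotallyBounded s) {ε : ℝ} (hε : 0 < ε) :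
    ∃ t : Finset U, (∀ q ∈ t, q ∈ s) ∧ ∀ p ∈ s, ∃ q ∈ t, dist p q ≤ ε := by
  obtain ⟨t, hts, hfin, hcov⟩ :=
    totallyBounded_iff_subset.mp h _ (Metric.dist_mem_uniformity hε)
  refine ⟨hfin.toFinset, fun q hq => hts (hfin.mem_toFinset.mp hq), fun p hp => ?_⟩
  obtain ⟨q, hq, hd⟩ := Set.mem_iUnion₂.mp (hcov hp)
  exact ⟨q, hfin.mem_toFinset.mpr hq, le_of_lt hd⟩

/-- The orbit of a point. -/
def Orb (u : U) : Set U := Set.range fun m : ℤ => (φ ^ m) u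

lemma self_mem_Orb (u : U) : u ∈ Orb φ u := ⟨0, by simp⟩

lemma zpow_mem_Orb (m : ℤ) (u : U) : (φ ^ m) u ∈ Orb φ u := ⟨m, rfl⟩

/-- The walk state. -/
structure Good {n : ℕ} (x : Fin n → U) (ORB : Set U) (u : U) (c : Fin n → ℝ)
    (hv e ρ : ℝ) : Prop where
  dx : ∀ i, dist u (x i) = c i
  dw : ∀ p ∈ ORB, |dist u p - hv| ≤ e
  orb : ∀ m : ℤ, dist ((φ ^ m) u) u ≤ ρ

lemma step (hU : FinitelyInjective U) (horb : ∀ z : U, TotallyBounded (Orb φ z))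
    {n : ℕ} {x : Fin n → U} (hx : ∀ i, φ (x i) = x i)
    {ORB : Set U} (hORBinv : ∀ p ∈ ORB, ∀ m : ℤ, (φ ^ m) p ∈ ORB)
    {W : Finset U} (hWsub : ∀ p ∈ W, p ∈ ORB)
    {βW : ℝ} (hcov : ∀ p ∈ ORB, ∃ w ∈ W, dist p w ≤ βW)
    {u : U} {c c' : Fin n → ℝ} {hv h' e ρ a βU : ℝ} (hβU : 0 < βU)
    (hG : Good φ x ORB u c hv e ρ)
    (T1 : ∀ i j, |c' i - c' j| ≤ dist (x i) (x j) ∧ dist (x i) (x j) ≤ c' i + c' j)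
    (T2 : ∀ i, |c' i - a| ≤ c i ∧ c i ≤ c' i + a)
    (T3 : ∀ i, ∀ p ∈ W, |c' i - h'| ≤ dist (x i) p ∧ dist (x i) p ≤ c' i + h')
    (T4 : |h' - a| ≤ hv - e ∧ hv + e ≤ h' + a)
    (T5 : ∀ p ∈ W, ∀ p' ∈ W, dist p p' ≤ h' + h')
    (T6 : ρ ≤ a + a) :
    ∃ u', Good φ x ORB u' c' h' βW (2 * a + βU) := by
  classical
  obtain ⟨NU0, hNU0orb, hNU0cov⟩ := exists_net (horb u) hβU
  have hNUorb : ∀ q ∈ insert u NU0, q ∈ Orb φ u := by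
    intro q hq
    rcases Finset.mem_insert.mp hq with h | h
    · exact h ▸ self_mem_Orb φ u
    · exact hNU0orb q h
  have hNUcov : ∀ p ∈ Orb φ u, ∃ q ∈ insert u NU0, dist p q ≤ βU := by
    intro p hp
    obtain ⟨q, hq, hd⟩ := hNU0cov p hp
    exact ⟨q, Finset.mem_insert_of_mem hq, hd⟩
  have hUmem : u ∈ insert u NU0 := Finset.mem_insert_self u NU0
  have fact1 : ∀ q ∈ Orb φ u, ∀ i, dist (x i) q = c i := by
    rintro q ⟨m, rfl⟩ i
    rw [dist_fixed_zpow φ (hx i) m u, dist_comm]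
    exact hG.dx i
  have fact2 : ∀ q ∈ Orb φ u, ∀ q' ∈ Orb φ u, dist q q' ≤ ρ := by
    rintro q ⟨m, rfl⟩ q' ⟨l, rfl⟩
    rw [dist_zpow_zpow]
    exact hG.orb (m - l)
  have fact3 : ∀ p ∈ ORB, ∀ q ∈ Orb φ u, |dist p q - hv| ≤ e := by
    rintro p hp q ⟨m, rfl⟩
    have h1 : dist p ((φ ^ m) u) = dist ((φ ^ (-m)) p) u := by
      rw [← dist_zpow φ (-m) p ((φ ^ m) u), zpow_apply_add]
      norm_num
    rw [h1, ← dist_comm u ((φ ^ (-m)) p)]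
    exact hG.dw _ (hORBinv p hp (-m))
  have hρ0 : (0 : ℝ) ≤ ρ := le_trans dist_nonneg (hG.orb 0)
  have ha : 0 ≤ a := by linarith
  have hWdw : ∀ p ∈ W, ∀ q ∈ Orb φ u, hv - e ≤ dist p q ∧ dist p q ≤ hv + e := by
    intro p hp q hq
    have := abs_le.mp (fact3 p (hWsub p hp) q hq)
    constructor <;> linarith [this.1, this.2]
  obtain ⟨z, hz⟩ := finInj hU
    (ι := Fin n ⊕ ({p // p ∈ W} ⊕ {q // q ∈ insert u NU0}))
    (Sum.elim x (Sum.elim (fun p => p.1) (fun q => q.1)))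
    (Sum.elim c' (Sum.elim (fun _ => h') (fun _ => a)))
    (by
      rintro (i | (p | q)) (j | (p' | q')) <;>
        simp only [Sum.elim_inl, Sum.elim_inr]
      · exact T1 i j
      · exact T3 i p'.1 p'.2
      · rw [fact1 q'.1 (hNUorb q'.1 q'.2) i]
        exact ⟨(T2 i).1, (T2 i).2⟩
      · refine ⟨?_, ?_⟩
        · rw [abs_sub_comm, dist_comm]; exact (T3 j p.1 p.2).1
        · rw [dist_comm, add_comm]; exact (T3 j p.1 p.2).2
      · refine ⟨by simpa using dist_nonneg, T5 p.1 p.2 p'.1 p'.2⟩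
      · exact ⟨le_trans T4.1 (hWdw p.1 p.2 q'.1 (hNUorb q'.1 q'.2)).1,
          le_trans (hWdw p.1 p.2 q'.1 (hNUorb q'.1 q'.2)).2 T4.2⟩
      · refine ⟨?_, ?_⟩
        · rw [abs_sub_comm, dist_comm, fact1 q.1 (hNUorb q.1 q.2) j]; exact (T2 j).1
        · rw [dist_comm, add_comm, fact1 q.1 (hNUorb q.1 q.2) j]; exact (T2 j).2
      · refine ⟨?_, ?_⟩
        · rw [abs_sub_comm, dist_comm]
          exact le_trans T4.1 (hWdw p'.1 p'.2 q.1 (hNUorb q.1 q.2)).1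
        · rw [dist_comm, add_comm]
          exact le_trans (hWdw p'.1 p'.2 q.1 (hNUorb q.1 q.2)).2 T4.2
      · exact ⟨by simpa using dist_nonneg,
          le_trans (fact2 _ (hNUorb q.1 q.2) _ (hNUorb q'.1 q'.2)) T6⟩)
  refine ⟨z, ?_, ?_, ?_⟩
  · intro i; exact hz (Sum.inl i)
  · intro p hp
    obtain ⟨w, hw, hd⟩ := hcov p hp
    have h1 : dist z w = h' := hz (Sum.inr (Sum.inl ⟨w, hw⟩))
    have h2 : |dist z p - dist z w| ≤ dist p w := by
      rw [dist_comm z p, dist_comm z w]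
      exact abs_dist_sub_le p w z
    calc |dist z p - h'| = |dist z p - dist z w| := by rw [h1]
      _ ≤ dist p w := h2
      _ ≤ βW := hd
  · intro m
    obtain ⟨qq, hqq, hdq⟩ := hNUcov ((φ ^ m) u) (zpow_mem_Orb φ m u)
    have h1 : dist z u = a := hz (Sum.inr (Sum.inr ⟨u, hUmem⟩))
    have h2 : dist z qq = a := hz (Sum.inr (Sum.inr ⟨qq, hqq⟩))
    calc dist ((φ ^ m) z) z
        ≤ dist ((φ ^ m) z) ((φ ^ m) u) + dist ((φ ^ m) u) qq + dist qq z :=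
          dist_triangle4 _ _ _ _
      _ ≤ a + βU + a := by
          rw [dist_zpow, h1]
          have h3 : dist qq z ≤ a := le_of_eq (by rw [dist_comm]; exact h2)
          linarith
      _ = 2 * a + βU := by ring

lemma walk (hU : FinitelyInjective U) (horb : ∀ z : U, TotallyBounded (Orb φ z))
    {n : ℕ} {x : Fin n → U} (hx : ∀ i, φ (x i) = x i)
    {ORB : Set U} (hORBinv : ∀ p ∈ ORB, ∀ m : ℤ, (φ ^ m) p ∈ ORB)
    {W : Finset U} (hWsub : ∀ p ∈ W, p ∈ ORB)
    {βW : ℝ} (hcov : ∀ p ∈ ORB, ∃ w ∈ W, dist p w ≤ βW)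
    (K : ℕ) (c : ℕ → Fin n → ℝ) (hv : ℕ → ℝ) (a : ℕ → ℝ) (βU : ℕ → ℝ) (e ρ : ℕ → ℝ)
    (hβU : ∀ k, 0 < βU k)
    (he : ∀ k, e (k + 1) = βW) (hρ : ∀ k, ρ (k + 1) = 2 * a k + βU k)
    {u0 : U} (h0 : Good φ x ORB u0 (c 0) (hv 0) (e 0) (ρ 0))
    (hstep : ∀ k, k < K →
      (∀ i j, |c (k+1) i - c (k+1) j| ≤ dist (x i) (x j) ∧
          dist (x i) (x j) ≤ c (k+1) i + c (k+1) j) ∧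
      (∀ i, |c (k+1) i - a k| ≤ c k i ∧ c k i ≤ c (k+1) i + a k) ∧
      (∀ i, ∀ p ∈ W, |c (k+1) i - hv (k+1)| ≤ dist (x i) p ∧
          dist (x i) p ≤ c (k+1) i + hv (k+1)) ∧
      (|hv (k+1) - a k| ≤ hv k - e k ∧ hv k + e k ≤ hv (k+1) + a k) ∧
      (∀ p ∈ W, ∀ p' ∈ W, dist p p' ≤ hv (k+1) + hv (k+1)) ∧
      (ρ k ≤ a k + a k)) :
    ∃ u, Good φ x ORB u (c K) (hv K) (e K) (ρ K) := by
  induction K with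
  | zero => exact ⟨u0, h0⟩
  | succ K ih =>
      obtain ⟨u, hu⟩ := ih (fun k hk => hstep k (Nat.lt_succ_of_lt hk))
      obtain ⟨t1, t2, t3, t4, t5, t6⟩ := hstep K (Nat.lt_succ_self K)
      rw [he K, hρ K]
      exact step φ hU horb hx hORBinv hWsub hcov (hβU K) hu t1 t2 t3 t4 t5 t6

set_option maxHeartbeats 1000000 in
lemma run (hU : FinitelyInjective U) (horb : ∀ z : U, TotallyBounded (Orb φ z))
    {N : ℕ} {x : Fin (N + 1) → U} (hx : ∀ i, φ (x i) = x i)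
    {f : Fin (N + 1) → ℝ}
    (hf : ∀ i j, |f i - f j| ≤ dist (x i) (x j) ∧ dist (x i) (x j) ≤ f i + f j)
    {μ : ℝ} (hμpos : 0 < μ) (hμ : ∀ i, μ ≤ f i)
    {q : ℝ} (hq0 : 0 < q) (hqμ : q ≤ μ / 2)
    {ORB : Set U} (hORBinv : ∀ p ∈ ORB, ∀ m : ℤ, (φ ^ m) p ∈ ORB)
    (hanch : ∀ p ∈ ORB, ∀ i, dist (x i) p = f i)
    (hdiam : ∀ p ∈ ORB, ∀ p' ∈ ORB, dist p p' ≤ q)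
    {W : Finset U} (hWsub : ∀ p ∈ W, p ∈ ORB)
    (hcov : ∀ p ∈ ORB, ∃ w ∈ W, dist p w ≤ min (μ / 4) (q / 8) / 8) :
    ∃ w', (∀ i, dist w' (x i) = f i) ∧ (∀ m : ℤ, dist ((φ ^ m) w') w' ≤ q / 2) ∧
      (∀ p ∈ ORB, dist w' p ≤ q) := by
  classical
  set A : ℝ := min (μ / 4) (q / 8) with hAdef
  have hA0 : 0 < A := lt_min (by linarith) (by linarith)
  have hAμ : A ≤ μ / 4 := min_le_left _ _
  have hAq : A ≤ q / 8 := min_le_right _ _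
  set βW : ℝ := A / 8 with hβWdef
  have hβW0 : 0 < βW := by positivity
  set b : ℝ := q / 2 + 2 * βW with hbdef
  clear_value b
  clear_value βW
  clear_value A
  rw [hAdef] at hβWdef
  have hb4A : 4 * A ≤ b := by linarith
  have hbμ : b ≤ μ / 2 := by
    rw [hAdef] at *
    linarith [min_le_left (μ/4) (q/8)]
  -- distances to the base fixed point x 0
  set s : Fin (N + 1) → ℝ := fun i => dist (x 0) (x i) with hsdef
  have hsnn : ∀ i, 0 ≤ s i := fun i => dist_nonneg
  have hs0 : s 0 = 0 := dist_self _
  have hsf1 : ∀ i, f 0 ≤ f i + s i := by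
    intro i
    have h2 := (abs_le.mp (hf 0 i).1).2
    simp only [hsdef]
    linarith [h2]
  have hsf2 : ∀ i, f i ≤ f 0 + s i := by
    intro i
    have h2 := (abs_le.mp (hf 0 i).1).1
    simp only [hsdef]
    linarith [h2]
  have hsf3 : ∀ i, s i ≤ f 0 + f i := fun i => (hf 0 i).2
  have hss : ∀ i j, |s i - s j| ≤ dist (x i) (x j) := by
    intro i j
    have := abs_dist_sub_le (x i) (x j) (x 0)
    simpa [hsdef, dist_comm] using this
  have hds : ∀ i j, dist (x i) (x j) ≤ s i + s j := by
    intro i j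
    calc dist (x i) (x j) ≤ dist (x i) (x 0) + dist (x 0) (x j) := dist_triangle _ _ _
      _ = s i + s j := by simp [hsdef, dist_comm]
  have hfnn : ∀ i, 0 ≤ f i := fun i => le_trans (le_of_lt hμpos) (hμ i)
  clear_value s
  -- path data
  set S : ℝ := Finset.univ.sup' Finset.univ_nonempty (fun i => max (f i - s i) 0) with hSdef
  have hS0 : 0 ≤ S := le_trans (le_max_right _ 0)
      (Finset.le_sup' (fun i => max (f i - s i) 0) (Finset.mem_univ 0))
  have hSi : ∀ i, f i - s i ≤ S := fun i => le_trans (le_max_left _ _)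
      (Finset.le_sup' (fun i => max (f i - s i) 0) (Finset.mem_univ i))
  clear_value S
  set T : ℝ := f 0 + S with hTdef
  clear_value T
  have hμT : μ ≤ T := by rw [hTdef]; linarith [hμ 0]
  have hT0 : 0 < T := lt_of_lt_of_le hμpos hμT
  have h4AT : 4 * A ≤ T := by
    rw [hAdef] at *
    linarith [min_le_left (μ/4) (q/8)]
  set K : ℕ := Nat.ceil (T / A) with hKdef
  have hK1 : 1 ≤ K := by
    rw [hKdef]
    exact Nat.one_le_ceil_iff.mpr (div_pos hT0 hA0)
  have hKA : T ≤ K * A := by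
    have h1 := Nat.le_ceil (T / A)
    rw [← hKdef] at h1
    calc T = T / A * A := by field_simp
      _ ≤ K * A := mul_le_mul_of_nonneg_right h1 (le_of_lt hA0)
  clear_value K
  -- grid functions
  set t : ℕ → ℝ := fun k => min (k * A) T with htdef
  clear_value t
  set g : ℝ → ℝ := fun u => max (f 0 - u) 0 with hgdef
  clear_value g
  set c : ℕ → Fin (N + 1) → ℝ := fun k i => min (s i + t k) (f i + g (t k)) with hcdef
  clear_value c
  set hvf : ℕ → ℝ := fun k => if k = 0 then f 0 else max (f 0 + A - t k) b with hvdef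
  clear_value hvf
  set aa : ℕ → ℝ := fun k => if k = 0 then A else A + 2 * βW - βW / 2 ^ k with haadef
  clear_value aa
  set βU : ℕ → ℝ := fun k => βW / 2 ^ (k + 1) with hβUdef
  clear_value βU
  set ee : ℕ → ℝ := fun k => if k = 0 then 0 else βW with heedef
  clear_value ee
  set ρ : ℕ → ℝ := fun k => Nat.casesOn k 0 (fun k' => 2 * aa k' + βU k') with hρdef
  clear_value ρ
  -- pointwise equations
  have htval : ∀ k : ℕ, t k = min (k * A) T := fun k => by simp [htdef]
  have hgval : ∀ u, g u = max (f 0 - u) 0 := fun u => by simp [hgdef]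
  have hcval : ∀ k i, c k i = min (s i + t k) (f i + g (t k)) := fun k i => by simp [hcdef]
  have hv0 : hvf 0 = f 0 := by simp [hvdef]
  have hvsucc : ∀ k : ℕ, hvf (k + 1) = max (f 0 + A - t (k + 1)) b := fun k => by
    simp [hvdef]
  have haa0 : aa 0 = A := by simp [haadef]
  have haasucc : ∀ k : ℕ, aa (k + 1) = A + 2 * βW - βW / 2 ^ (k + 1) := fun k => by
    simp [haadef]
  have hβUval : ∀ k : ℕ, βU k = βW / 2 ^ (k + 1) := fun k => by simp [hβUdef]
  have hee0 : ee 0 = 0 := by simp [heedef]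
  have heesucc : ∀ k : ℕ, ee (k + 1) = βW := fun k => by simp [heedef]
  have hρ0 : ρ 0 = 0 := by simp [hρdef]
  have hρsucc : ∀ k : ℕ, ρ (k + 1) = 2 * aa k + βU k := fun k => by simp [hρdef]
  -- facts about t
  have htnn : ∀ k, 0 ≤ t k := fun k => by
    rw [htval]; exact le_min (by positivity) (le_of_lt hT0)
  have ht0 : t 0 = 0 := by
    rw [htval]
    norm_num
    exact le_of_lt hT0
  have htT : ∀ k, t k ≤ T := fun k => by rw [htval]; exact min_le_right _ _
  have htmono : ∀ k, t k ≤ t (k + 1) := by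
    intro k
    rw [htval, htval]
    apply min_le_min _ le_rfl
    have h1 : (k : ℝ) ≤ ((k + 1 : ℕ) : ℝ) := by exact_mod_cast Nat.le_succ k
    nlinarith [hA0]
  have htlip : ∀ k, t (k + 1) ≤ t k + A := by
    intro k
    rw [htval, htval]
    rcases le_or_gt ((k : ℝ) * A) T with h | h
    · rw [min_eq_left h]
      refine le_trans (min_le_left _ _) ?_
      push_cast
      linarith
    · rw [min_eq_right (le_of_lt h)]
      exact le_trans (min_le_right _ _) (by linarith)
  have htlb1 : ∀ k, 1 ≤ k → A ≤ t k := by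
    intro k hk
    rw [htval]
    apply le_min
    · have h1 : (1 : ℝ) ≤ (k : ℝ) := by exact_mod_cast hk
      nlinarith [hA0]
    · linarith
  have ht1 : t 1 = A := by
    rw [htval]
    push_cast
    rw [one_mul]
    exact min_eq_left (by linarith)
  have htK : t K = T := by rw [htval]; exact min_eq_right hKA
  -- facts about g
  have hgnn : ∀ u, 0 ≤ g u := fun u => by rw [hgval]; exact le_max_right _ _
  have hgf0 : ∀ u, f 0 - u ≤ g u := fun u => by rw [hgval]; exact le_max_left _ _
  have hgmono : ∀ k, g (t (k + 1)) ≤ g (t k) := by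
    intro k
    rw [hgval, hgval]
    apply max_le_max _ le_rfl
    linarith [htmono k]
  have hglip : ∀ k, g (t k) ≤ g (t (k + 1)) + (t (k + 1) - t k) := by
    intro k
    rw [hgval]
    apply max_le
    · have := hgf0 (t (k + 1)); linarith
    · have := hgnn (t (k + 1)); linarith [htmono k]
  -- facts about c
  have hcnn : ∀ k i, 0 ≤ c k i := by
    intro k i
    rw [hcval]
    exact le_min (by have := hsnn i; have := htnn k; linarith)
      (by have := hfnn i; have := hgnn (t k); linarith)
  have hcfloor : ∀ k i, min (t k) μ ≤ c k i := by
    intro k i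
    rw [hcval]
    apply le_min
    · exact le_trans (min_le_left _ _) (by have := hsnn i; linarith)
    · exact le_trans (min_le_right _ _) (by have := hgnn (t k); linarith [hμ i])
  have hcfloorA : ∀ k i, 1 ≤ k → A ≤ c k i := by
    intro k i hk
    refine le_trans (le_min (htlb1 k hk) (by rw [hAdef] at *; linarith [min_le_left (μ/4) (q/8)]))
      (hcfloor k i)
  have hc0 : ∀ i, c 0 i = s i := by
    intro i
    rw [hcval, ht0]
    have hg0 : g 0 = f 0 := by
      rw [hgval]; rw [sub_zero]; exact max_eq_left (hfnn 0)
    rw [hg0, add_zero]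
    exact min_eq_left (by linarith [hsf3 i])
  have hcstep : ∀ k i, |c (k + 1) i - c k i| ≤ A := by
    intro k i
    rw [hcval, hcval]
    have h1 : |(s i + t (k + 1)) - (s i + t k)| ≤ A := by
      rw [abs_le]
      constructor
      · linarith [htmono k]
      · linarith [htlip k]
    have h2 : |(f i + g (t (k + 1))) - (f i + g (t k))| ≤ A := by
      rw [abs_le]
      constructor
      · have := hglip k; have := htlip k; linarith
      · have := hgmono k; have := htmono k; linarith
    exact le_trans (abs_min_sub_min_le_max _ _ _ _) (max_le h1 h2)
  have hcKat : ∀ k i j, |c k i - c k j| ≤ dist (x i) (x j) ∧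
      dist (x i) (x j) ≤ c k i + c k j := by
    intro k i j
    constructor
    · rw [hcval, hcval]
      refine le_trans (abs_min_sub_min_le_max _ _ _ _) (max_le ?_ ?_)
      · simpa using hss i j
      · simpa using (hf i j).1
    · have htg : f 0 ≤ t k + g (t k) := by have := hgf0 (t k); linarith
      rw [hcval, hcval]
      rcases min_cases (s i + t k) (f i + g (t k)) with ⟨hi, _⟩ | ⟨hi, _⟩ <;>
        rcases min_cases (s j + t k) (f j + g (t k)) with ⟨hj, _⟩ | ⟨hj, _⟩ <;> rw [hi, hj]
      · linarith only [hds i j, htnn k]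
      · linarith only [hsf3 j, hds i j, hsnn j, htg]
      · linarith only [hsf3 i, hds i j, hsnn i, htg]
      · linarith only [(hf i j).2, hgnn (t k)]
  have hβWA : βW = A / 8 := by rw [hβWdef, hAdef]
  have hμ4A : 4 * A ≤ μ := by linarith
  -- facts about hvf
  have hvb : ∀ k, b ≤ hvf k := by
    intro k
    cases k with
    | zero => rw [hv0]; linarith [hμ 0]
    | succ k => rw [hvsucc]; exact le_max_right _ _
  have hv1 : hvf 1 = f 0 := by
    rw [hvsucc 0, ht1]
    have h1 : f 0 + A - A = f 0 := by ring
    rw [h1]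
    exact max_eq_left (by linarith [hμ 0])
  have hvmono : ∀ k, hvf (k + 1) ≤ hvf k := by
    intro k
    cases k with
    | zero => rw [hv1, hv0]
    | succ k =>
        rw [hvsucc, hvsucc]
        apply max_le_max _ le_rfl
        linarith [htmono (k + 1)]
  have hvlipA : ∀ k, hvf k ≤ hvf (k + 1) + A := by
    intro k
    cases k with
    | zero => rw [hv0, hv1]; linarith
    | succ k =>
        rw [hvsucc, hvsucc]
        apply max_le
        · refine le_trans (by linarith [htlip (k + 1)] :
            f 0 + A - t (k + 1) ≤ (f 0 + A - t (k + 1 + 1)) + A) ?_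
          exact add_le_add_left (le_max_left _ _) A
        · linarith [le_max_right (f 0 + A - t (k + 1 + 1)) b]
  -- facts about aa
  have haalb : ∀ k, A ≤ aa k := by
    intro k
    cases k with
    | zero => rw [haa0]
    | succ k =>
        rw [haasucc]
        have h1 : βW / 2 ^ (k + 1) ≤ βW := div_le_self hβW0.le (one_le_pow₀ (by norm_num))
        linarith
  have haaub : ∀ k, aa k ≤ A + 2 * βW := by
    intro k
    cases k with
    | zero => rw [haa0]; linarith
    | succ k =>
        rw [haasucc]
        have h1 : 0 ≤ βW / 2 ^ (k + 1) := by positivity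
        linarith
  have haalb2 : ∀ k, A + βW ≤ aa (k + 1) := by
    intro k
    rw [haasucc]
    have h2 : (2:ℝ) ≤ 2 ^ (k + 1) := by
      calc (2:ℝ) = 2 ^ 1 := (pow_one 2).symm
        _ ≤ 2 ^ (k + 1) := pow_le_pow_right₀ (by norm_num) (Nat.le_add_left 1 k)
    have h1 : βW / 2 ^ (k + 1) ≤ βW / 2 := by
      rw [div_le_div_iff₀ (by positivity) (by norm_num)]
      nlinarith [hβW0.le]
    linarith
  have hβUpos : ∀ k, 0 < βU k := by
    intro k; rw [hβUval]; positivity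
  have hρa : ∀ k, ρ k ≤ aa k + aa k := by
    intro k
    cases k with
    | zero => rw [hρ0, haa0]; linarith
    | succ k =>
        rw [hρsucc, hβUval]
        cases k with
        | zero =>
            rw [haa0, haasucc]
            norm_num
            linarith
        | succ k' =>
            rw [haasucc, haasucc]
            have h1 : βW / 2 ^ (k' + 1 + 1) = βW / 2 ^ (k' + 1) / 2 := by
              rw [pow_succ]; ring
            have h2 : 0 ≤ βW / 2 ^ (k' + 1) := by positivity
            rw [h1]
            linarith
  -- initial state
  have hGood0 : Good φ x ORB (x 0) (c 0) (hvf 0) (ee 0) (ρ 0) := by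
    refine ⟨?_, ?_, ?_⟩
    · intro i; rw [hc0 i]; simp [hsdef]
    · intro p hp; rw [hv0, hee0, hanch p hp 0, sub_self, abs_zero]
    · intro m; rw [hρ0, zpow_fixed φ (hx 0) m, dist_self]
  -- step hypotheses
  have hsteps : ∀ k, k < K →
      (∀ i j, |c (k+1) i - c (k+1) j| ≤ dist (x i) (x j) ∧
          dist (x i) (x j) ≤ c (k+1) i + c (k+1) j) ∧
      (∀ i, |c (k+1) i - aa k| ≤ c k i ∧ c k i ≤ c (k+1) i + aa k) ∧
      (∀ i, ∀ p ∈ W, |c (k+1) i - hvf (k+1)| ≤ dist (x i) p ∧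
          dist (x i) p ≤ c (k+1) i + hvf (k+1)) ∧
      (|hvf (k+1) - aa k| ≤ hvf k - ee k ∧ hvf k + ee k ≤ hvf (k+1) + aa k) ∧
      (∀ p ∈ W, ∀ p' ∈ W, dist p p' ≤ hvf (k+1) + hvf (k+1)) ∧
      (ρ k ≤ aa k + aa k) := by
    intro k _
    refine ⟨fun i j => hcKat (k+1) i j, ?_, ?_, ?_, ?_, hρa k⟩
    · -- ST2
      intro i
      have habs := abs_le.mp (hcstep k i)
      have h1 := haalb k
      have h2 := haaub k
      constructor
      · rw [abs_le]
        constructor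
        · have hsum : aa k ≤ c k i + c (k + 1) i := by
            cases k with
            | zero =>
                rw [hc0 i, haa0]
                have := hcfloorA 1 i le_rfl
                have := hsnn i
                linarith
            | succ k' =>
                have ha := hcfloorA (k' + 1) i (Nat.le_add_left 1 k')
                have hb' := hcfloorA (k' + 1 + 1) i (Nat.le_add_left 1 (k' + 1))
                have h3 : aa (k' + 1) ≤ A + 2 * βW := haaub _
                rw [hβWA] at h3
                linarith
          linarith
        · linarith [habs.2]
      · linarith [habs.1]
    · -- ST3
      intro i p hp
      have hdp : dist (x i) p = f i := hanch p (hWsub p hp) i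
      rw [hdp, hvsucc k]
      have htA : A ≤ t (k + 1) := htlb1 (k + 1) (Nat.le_add_left 1 k)
      have hc' := hcval (k + 1) i
      have hgl := hgf0 (t (k + 1))
      have hgn := hgnn (t (k + 1))
      have hb0 : 0 < b := by rw [hbdef]; linarith
      have hMl := le_max_left (f 0 + A - t (k + 1)) b
      have hMb := le_max_right (f 0 + A - t (k + 1)) b
      have h1 : c (k + 1) i ≤ f i + max (f 0 + A - t (k + 1)) b := by
        rw [hc']
        refine le_trans (min_le_right _ _) ?_
        have hg' : g (t (k + 1)) ≤ max (f 0 + A - t (k + 1)) b := by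
          rw [hgval]
          apply max_le
          · linarith
          · linarith
        linarith
      have h2 : max (f 0 + A - t (k + 1)) b ≤ c (k + 1) i + f i := by
        apply max_le
        · rw [hc']
          have ha1 : f 0 + A - t (k + 1) - f i ≤ s i + t (k + 1) := by
            linarith [hsf1 i]
          have ha2 : f 0 + A - t (k + 1) - f i ≤ f i + g (t (k + 1)) := by
            linarith [hμ i]
          have := le_min ha1 ha2
          linarith
        · linarith [hbμ, hμ i, hcnn (k + 1) i]
      have h3 : f i ≤ c (k + 1) i + max (f 0 + A - t (k + 1)) b := by
        rw [hc']
        have ha1 : f i - max (f 0 + A - t (k + 1)) b ≤ s i + t (k + 1) := by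
          have := hsf2 i
          linarith
        have ha2 : f i - max (f 0 + A - t (k + 1)) b ≤ f i + g (t (k + 1)) := by
          linarith
        have := le_min ha1 ha2
        linarith
      exact ⟨abs_le.mpr ⟨by linarith, by linarith⟩, h3⟩
    · -- ST4
      cases k with
      | zero =>
          rw [hv1, hv0, hee0, haa0]
          constructor
          · rw [abs_le]
            constructor
            · linarith [hμ 0]
            · linarith [hμ 0, hA0]
          · linarith [hA0]
      | succ k' =>
          rw [heesucc]
          have h1 := hvmono (k' + 1)
          have h2 := hvlipA (k' + 1)
          have h3 := hvb (k' + 1)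
          have h4 := hvb (k' + 1 + 1)
          have h5 := haalb2 k'
          have h6 := haaub (k' + 1)
          constructor
          · rw [abs_le]
            constructor
            · -- aa k - hvf (k+1) ≤ hvf k - βW, as lower bound form
              rw [hβWA] at h6
              linarith
            · linarith
          · linarith
    · -- ST5
      intro p hp p' hp'
      have := hdiam p (hWsub p hp) p' (hWsub p' hp')
      have h1 := hvb (k + 1)
      rw [hbdef] at h1
      linarith
  obtain ⟨w', hw'⟩ := walk φ hU horb hx hORBinv hWsub hcov K c hvf aa βU ee ρ
    hβUpos heesucc hρsucc hGood0 hsteps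
  obtain ⟨K', rfl⟩ : ∃ K', K = K' + 1 := ⟨K - 1, (Nat.succ_pred_eq_of_pos hK1).symm⟩
  have hcK : ∀ i, c (K' + 1) i = f i := by
    intro i
    rw [hcval, htK]
    have hgT : g T = 0 := by
      rw [hgval]
      refine max_eq_right ?_
      rw [hTdef]
      linarith
    rw [hgT, add_zero]
    refine min_eq_right ?_
    rw [hTdef]
    linarith [hSi i, hfnn 0]
  have hvK : hvf (K' + 1) = b := by
    rw [hvsucc, htK]
    refine max_eq_right ?_
    rw [hTdef]
    linarith
  refine ⟨w', ?_, ?_, ?_⟩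
  · intro i; rw [← hcK i]; exact hw'.dx i
  · intro m
    have hρK : ρ (K' + 1) ≤ q / 2 := by
      rw [hρsucc, hβUval]
      have h1 := haaub K'
      have h2 : βW / 2 ^ (K' + 1) ≤ βW := div_le_self hβW0.le (one_le_pow₀ (by norm_num))
      rw [hβWA] at h1 h2 ⊢
      rw [hAdef] at *
      linarith [min_le_right (μ/4) (q/8)]
    exact le_trans (hw'.orb m) hρK
  · intro p hp
    have hdw := hw'.dw p hp
    rw [hvK, heesucc] at hdw
    have h2 := (abs_le.mp hdw).2
    rw [hbdef] at h2
    rw [hβWA, hAdef] at *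
    linarith [min_le_right (μ/4) (q/8), h2]


lemma exact_realization (hU : FinitelyInjective U) (horb : ∀ z : U, TotallyBounded (Orb φ z))
    [CompleteSpace U] (hfix : ∃ x : U, φ x = x) (n : ℕ) (x : Fin n → U)
    (hx : ∀ i, φ (x i) = x i) (f : Fin n → ℝ)
    (hf : ∀ i j, |f i - f j| ≤ dist (x i) (x j) ∧ dist (x i) (x j) ≤ f i + f j) :
    ∃ z : U, φ z = z ∧ ∀ i, dist z (x i) = f i := by
  classical
  cases n with
  | zero => obtain ⟨z, hz⟩ := hfix; exact ⟨z, hz, fun i => i.elim0⟩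
  | succ N =>
    have hfnn : ∀ i, 0 ≤ f i := by
      intro i
      have h1 := (hf i i).2
      rw [dist_self] at h1
      linarith
    by_cases hzero : ∃ i, f i = 0
    · obtain ⟨i0, hi0⟩ := hzero
      refine ⟨x i0, hx i0, fun j => ?_⟩
      have h1 := abs_le.mp (hf i0 j).1
      have h2 := (hf i0 j).2
      rw [hi0] at h1 h2
      exact le_antisymm (by linarith [h2]) (by linarith [h1.1])
    · push_neg at hzero
      set μ : ℝ := Finset.univ.inf' Finset.univ_nonempty f with hμdef
      have hμle : ∀ i, μ ≤ f i := fun i => Finset.inf'_le f (Finset.mem_univ i)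
      have hμpos : 0 < μ := by
        obtain ⟨i0, -, hi0⟩ := Finset.exists_mem_eq_inf' Finset.univ_nonempty f
        rw [hμdef, hi0]
        exact lt_of_le_of_ne (hfnn i0) (Ne.symm (hzero i0))
      clear_value μ
      -- base point from a run with empty fat anchor
      obtain ⟨w0, hw0f, hw0orb, -⟩ := run φ hU horb hx hf hμpos hμle (q := μ / 2)
        (by positivity) le_rfl (ORB := (∅ : Set U)) (by simp) (by simp) (by simp)
        (W := (∅ : Finset U)) (by simp) (by simp)
      -- the improvement step
      have hstep : ∀ (k : ℕ) (w : U), ((∀ i, dist w (x i) = f i) ∧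
          ∀ m : ℤ, dist ((φ ^ m) w) w ≤ μ / 2 / 2 ^ k) →
          ∃ w' : U, ((∀ i, dist w' (x i) = f i) ∧
            ∀ m : ℤ, dist ((φ ^ m) w') w' ≤ μ / 2 / 2 ^ (k + 1)) ∧
            dist w' w ≤ μ / 2 / 2 ^ k := by
        intro k w ⟨hwf, hworb⟩
        have hq0 : 0 < μ / 2 / 2 ^ k := by positivity
        have hqμ : μ / 2 / 2 ^ k ≤ μ / 2 :=
          div_le_self (by positivity) (one_le_pow₀ (by norm_num))
        have hcovε : 0 < min (μ / 4) (μ / 2 / 2 ^ k / 8) / 8 := by positivity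
        obtain ⟨W, hWsub, hWcov⟩ := exists_net (horb w) hcovε
        obtain ⟨w', h1, h2, h3⟩ := run φ hU horb hx hf hμpos hμle hq0 hqμ
          (ORB := Orb φ w)
          (by rintro p ⟨l, rfl⟩ m; rw [zpow_apply_add]; exact zpow_mem_Orb φ (m + l) w)
          (by rintro p ⟨l, rfl⟩ i; rw [dist_fixed_zpow φ (hx i) l w, dist_comm]; exact hwf i)
          (by rintro p ⟨l, rfl⟩ p' ⟨l', rfl⟩; rw [dist_zpow_zpow]; exact hworb (l - l'))
          (W := W) hWsub hWcov
        refine ⟨w', ⟨h1, fun m => ?_⟩, h3 w (self_mem_Orb φ w)⟩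
        have := h2 m
        rw [div_div, ← pow_succ] at this
        exact this
      choose F hF1 hF2 using hstep
      -- iterate
      set SX : (k : ℕ) → Type _ := fun k => {w : U // (∀ i, dist w (x i) = f i) ∧
        ∀ m : ℤ, dist ((φ ^ m) w) w ≤ μ / 2 / 2 ^ k} with hSXdef
      have hw0S : (∀ i, dist w0 (x i) = f i) ∧
          ∀ m : ℤ, dist ((φ ^ m) w0) w0 ≤ μ / 2 / 2 ^ 0 := by
        refine ⟨hw0f, fun m => le_trans (hw0orb m) ?_⟩
        rw [pow_zero, div_one]
        exact div_le_self (by positivity) (by norm_num)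
      set g : (k : ℕ) → SX k := fun k => Nat.rec (⟨w0, hw0S⟩ : SX 0)
        (fun k prev => (⟨F k prev.1 prev.2, hF1 k prev.1 prev.2⟩ : SX (k + 1))) k with hgdef
      have hgsucc : ∀ k, (g (k + 1)).1 = F k (g k).1 (g k).2 := fun k => rfl
      set u : ℕ → U := fun k => (g k).1 with hudef
      have hud : ∀ k, dist (u k) (u (k + 1)) ≤ μ / 2 * (1 / 2) ^ k := by
        intro k
        rw [dist_comm]
        have := hF2 k (g k).1 (g k).2
        rw [hudef]
        simp only [hgsucc]
        refine le_trans this (le_of_eq ?_)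
        rw [div_pow, one_pow, div_div]
        ring_nf
      have hcauchy : CauchySeq u := cauchySeq_of_le_geometric (1/2) (μ/2) (by norm_num) hud
      obtain ⟨z, hz⟩ := cauchySeq_tendsto_of_complete hcauchy
      have huorb : ∀ k, dist (φ (u k)) (u k) ≤ μ / 2 / 2 ^ k := by
        intro k
        have := (g k).2.2 1
        rw [zpow_one] at this
        exact this
      have hgeo : Filter.Tendsto (fun k : ℕ => μ / 2 / 2 ^ k) Filter.atTop (nhds 0) := by
        have h1 : Filter.Tendsto (fun k : ℕ => ((1 : ℝ)/2) ^ k) Filter.atTop (nhds 0) :=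
          tendsto_pow_atTop_nhds_zero_of_lt_one (by norm_num) (by norm_num)
        have h2 := h1.const_mul (μ / 2)
        rw [mul_zero] at h2
        refine h2.congr fun k => ?_
        rw [div_pow, one_pow, div_div]
        ring_nf
      have hφz : φ z = z := by
        have h1 : Filter.Tendsto (fun k => dist (φ (u k)) (u k)) Filter.atTop
            (nhds (dist (φ z) z)) := Filter.Tendsto.dist ((φ.continuous.tendsto z).comp hz) hz
        have h2 : Filter.Tendsto (fun k => dist (φ (u k)) (u k)) Filter.atTop (nhds 0) :=
          squeeze_zero (fun k => dist_nonneg) huorb hgeo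
        have := tendsto_nhds_unique h1 h2
        exact dist_eq_zero.mp this
      refine ⟨z, hφz, fun i => ?_⟩
      have h1 : Filter.Tendsto (fun k => dist (u k) (x i)) Filter.atTop
          (nhds (dist z (x i))) := Filter.Tendsto.dist hz tendsto_const_nhds
      have h2 : Filter.Tendsto (fun k => dist (u k) (x i)) Filter.atTop (nhds (f i)) := by
        refine Filter.Tendsto.congr (fun k => ((g k).2.1 i).symm) tendsto_const_nhds
      exact tendsto_nhds_unique h1 h2

set_option maxHeartbeats 1000000 in
lemma fix_isometric (hU : FinitelyInjective U) [CompleteSpace U] [Nonempty U]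
    (horb : ∀ z : U, TotallyBounded (Orb φ z)) (hfix : ∃ x : U, φ x = x)
    (hsep : TopologicalSpace.SeparableSpace U) :
    Nonempty (({x : U | φ x = x} : Set U) ≃ᵢ U) := by
  classical
  haveI := hsep
  haveI : SecondCountableTopology U := UniformSpace.secondCountable_of_separable U
  set Fx : Set U := {x : U | φ x = x} with hFxdef
  have hFxclosed : IsClosed Fx := isClosed_eq φ.continuous continuous_id
  haveI : CompleteSpace ↥Fx := hFxclosed.completeSpace_coe
  haveI : Nonempty ↥Fx := ⟨⟨hfix.choose, hfix.choose_spec⟩⟩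
  obtain ⟨D, hD⟩ := TopologicalSpace.exists_dense_seq ↥Fx
  obtain ⟨E, hE⟩ := TopologicalSpace.exists_dense_seq U
  -- one step of the back-and-forth
  have hstep : ∀ (m : ℕ) (prev : Fin m → (↥Fx × U)), ∃ y : ↥Fx × U,
      ((∀ i j, dist (prev i).1 (prev j).1 = dist (prev i).2 (prev j).2) →
        ∀ j, dist y.1 (prev j).1 = dist y.2 (prev j).2) ∧
      (m % 2 = 0 → y.1 = D (m / 2)) ∧ (m % 2 = 1 → y.2 = E (m / 2)) := by
    intro m prev
    rcases Classical.em (∀ i j, dist (prev i).1 (prev j).1 = dist (prev i).2 (prev j).2)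
      with hiso | hiso
    · rcases Nat.mod_two_eq_zero_or_one m with hm | hm
      · -- extend on the U side
        obtain ⟨zq, hzq⟩ := hU m (fun j => (prev j).2)
          (fun j => dist (D (m / 2)) ((prev j).1)) (by
            intro i j
            rw [← hiso i j]
            constructor
            · have h1 := abs_dist_sub_le ((prev i).1) ((prev j).1) (D (m / 2))
              rw [dist_comm ((prev i).1) (D (m/2)), dist_comm ((prev j).1) (D (m/2))] at h1
              exact h1
            · have h1 := dist_triangle ((prev i).1) (D (m / 2)) ((prev j).1)
              rw [dist_comm ((prev i).1) (D (m/2))] at h1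
              exact h1)
        refine ⟨(D (m / 2), zq), fun _ j => ?_, fun _ => rfl, fun h1 => by omega⟩
        exact (hzq j).symm
      · -- extend on the Fix side, using the fixed-point realization lemma
        obtain ⟨z, hz1, hz2⟩ := exact_realization φ hU horb hfix m
          (fun j => ((prev j).1 : U)) (fun j => (prev j).1.2)
          (fun j => dist (E (m / 2)) ((prev j).2)) (by
            intro i j
            have hd : dist ((prev i).1 : U) ((prev j).1 : U) = dist (prev i).2 (prev j).2 := by
              rw [← Subtype.dist_eq, hiso i j]
            rw [hd]
            constructor
            · have h1 := abs_dist_sub_le ((prev i).2) ((prev j).2) (E (m / 2))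
              rw [dist_comm ((prev i).2) (E (m/2)), dist_comm ((prev j).2) (E (m/2))] at h1
              exact h1
            · have h1 := dist_triangle ((prev i).2) (E (m / 2)) ((prev j).2)
              rw [dist_comm ((prev i).2) (E (m/2))] at h1
              exact h1)
        refine ⟨(⟨z, hz1⟩, E (m / 2)), fun _ j => ?_, fun h1 => by omega, fun _ => rfl⟩
        rw [Subtype.dist_eq]
        rw [hz2 j]
    · exact ⟨(D (m / 2), E (m / 2)), fun h => absurd h hiso, fun _ => rfl, fun _ => rfl⟩
  -- iterate
  obtain ⟨G, hGsucc⟩ : ∃ G : (m : ℕ) → Fin m → (↥Fx × U), ∀ m,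
      G (m + 1) = Fin.snoc (G m) (Classical.choose (hstep m (G m))) :=
    ⟨fun m => Nat.rec (motive := fun m => Fin m → (↥Fx × U)) (fun i => i.elim0)
      (fun m prev => Fin.snoc prev (Classical.choose (hstep m prev))) m, fun m => rfl⟩
  have hIso : ∀ m, ∀ i j : Fin m, dist ((G m i).1) ((G m j).1) = dist ((G m i).2) ((G m j).2) := by
    intro m
    induction m with
    | zero => intro i _; exact i.elim0
    | succ m ih =>
        have hnew : ∀ j : Fin m, dist (Classical.choose (hstep m (G m))).1 ((G m j).1)
            = dist (Classical.choose (hstep m (G m))).2 ((G m j).2) :=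
          (Classical.choose_spec (hstep m (G m))).1 ih
        intro i j
        rw [hGsucc]
        rcases Fin.eq_castSucc_or_eq_last i with ⟨i', rfl⟩ | rfl <;>
          rcases Fin.eq_castSucc_or_eq_last j with ⟨j', rfl⟩ | rfl <;>
            simp only [Fin.snoc_castSucc, Fin.snoc_last]
        · exact ih i' j'
        · rw [dist_comm, dist_comm ((G m i').2)]
          exact hnew i'
        · exact hnew j'
        · rw [dist_self, dist_self]
  set pq : ℕ → (↥Fx × U) := fun m => G (m + 1) (Fin.last m) with hpqdef
  have hpqval : ∀ m, pq m = Classical.choose (hstep m (G m)) := by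
    intro m
    rw [hpqdef]
    simp only []
    rw [hGsucc]
    exact Fin.snoc_last _ _
  have hmem : ∀ (m k : ℕ) (h : k < m), G m ⟨k, h⟩ = pq k := by
    intro m
    induction m with
    | zero => intro k h; omega
    | succ m ih =>
        intro k hk
        rcases Nat.lt_succ_iff_lt_or_eq.mp hk with h | h
        · have heq : (⟨k, hk⟩ : Fin (m + 1)) = (⟨k, h⟩ : Fin m).castSucc := by
            apply Fin.ext; simp [Fin.castSucc]
          rw [heq, hGsucc, Fin.snoc_castSucc]
          exact ih k h
        · subst h
          have heq : (⟨k, hk⟩ : Fin (k + 1)) = Fin.last k := by apply Fin.ext; simp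
          rw [heq, hGsucc, Fin.snoc_last, ← hpqval]
  set p : ℕ → ↥Fx := fun k => (pq k).1 with hpdef
  set q : ℕ → U := fun k => (pq k).2 with hqdef
  have hpq : ∀ i j : ℕ, dist (p i) (p j) = dist (q i) (q j) := by
    intro i j
    have hm1 : i < max i j + 1 := by omega
    have hm2 : j < max i j + 1 := by omega
    have h1 := hIso (max i j + 1) ⟨i, hm1⟩ ⟨j, hm2⟩
    rw [hmem _ i hm1, hmem _ j hm2] at h1
    exact h1
  have hpD : ∀ k, p (2 * k) = D k := by
    intro k
    have h1 := (Classical.choose_spec (hstep (2 * k) (G (2 * k)))).2.1 (by omega)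
    rw [hpdef]
    simp only []
    rw [hpqval]
    rw [h1]
    congr 1
    omega
  have hqE : ∀ k, q (2 * k + 1) = E k := by
    intro k
    have h1 := (Classical.choose_spec (hstep (2 * k + 1) (G (2 * k + 1)))).2.2 (by omega)
    rw [hqdef]
    simp only []
    rw [hpqval]
    rw [h1]
    congr 1
    omega
  have hpdense : Dense (Set.range p) := by
    refine Dense.mono ?_ hD
    rintro _ ⟨k, rfl⟩
    exact ⟨2 * k, hpD k⟩
  -- approximation choice
  have happrox : ∀ (ξ : ↥Fx) (k : ℕ), ∃ a : ℕ, dist ξ (p a) < 1 / (k + 1) := by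
    intro ξ k
    have : DenseRange p := hpdense
    exact this.exists_dist_lt ξ (by positivity)
  choose av hav using happrox
  have hQcauchy : ∀ ξ : ↥Fx, CauchySeq (fun l => q (av ξ l)) := by
    intro ξ
    apply cauchySeq_of_le_tendsto_0 (fun l : ℕ => 2 / (l + 1))
    · intro n m L hn hm
      show dist (q (av ξ n)) (q (av ξ m)) ≤ 2 / (L + 1)
      rw [← hpq]
      have h2 := (hav ξ n).le
      have h3 := (hav ξ m).le
      have h4 : (1 : ℝ) / (n + 1) ≤ 1 / (L + 1) := by
        apply div_le_div_of_nonneg_left (by norm_num) (by positivity)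
        exact_mod_cast Nat.succ_le_succ hn
      have h5 : (1 : ℝ) / (m + 1) ≤ 1 / (L + 1) := by
        apply div_le_div_of_nonneg_left (by norm_num) (by positivity)
        exact_mod_cast Nat.succ_le_succ hm
      have h6 : dist (p (av ξ n)) (p (av ξ m)) ≤ dist (p (av ξ n)) ξ + dist ξ (p (av ξ m)) :=
        dist_triangle _ _ _
      rw [dist_comm (p (av ξ n)) ξ] at h6
      have h7 : (2 : ℝ) / (L + 1) = 1 / (L + 1) + 1 / (L + 1) := by ring
      rw [h7]
      exact h6.trans (add_le_add (h2.trans h4) (h3.trans h5))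
    · have h1 : Filter.Tendsto (fun l : ℕ => (1 : ℝ) / (l + 1)) Filter.atTop (nhds 0) :=
        tendsto_one_div_add_atTop_nhds_zero_nat
      have h2 := h1.const_mul (2 : ℝ)
      rw [mul_zero] at h2
      refine h2.congr fun l => by ring
  have hF : ∀ ξ : ↥Fx, ∃ y : U, Filter.Tendsto (fun l => q (av ξ l)) Filter.atTop (nhds y) :=
    fun ξ => cauchySeq_tendsto_of_complete (hQcauchy ξ)
  choose F hFlim using hF
  -- the key distance estimate
  have hFdist : ∀ (ξ : ↥Fx) (m : ℕ), dist (q m) (F ξ) ≤ dist (p m) ξ := by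
    intro ξ m
    have h1 : Filter.Tendsto (fun l => dist (q m) (q (av ξ l))) Filter.atTop
        (nhds (dist (q m) (F ξ))) := Filter.Tendsto.dist tendsto_const_nhds (hFlim ξ)
    have h2 : Filter.Tendsto (fun l : ℕ => dist (p m) ξ + 1 / (l + 1)) Filter.atTop
        (nhds (dist (p m) ξ)) := by
      have := tendsto_one_div_add_atTop_nhds_zero_nat.const_add (dist (p m) ξ)
      rw [add_zero] at this
      exact this
    refine le_of_tendsto_of_tendsto' h1 h2 fun l => ?_
    rw [← hpq]
    calc dist (p m) (p (av ξ l)) ≤ dist (p m) ξ + dist ξ (p (av ξ l)) := dist_triangle _ _ _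
      _ ≤ dist (p m) ξ + 1 / (l + 1) := by linarith [hav ξ l]
  have hFp : ∀ m, F (p m) = q m := by
    intro m
    have h1 := hFdist (p m) m
    rw [dist_self] at h1
    have := le_antisymm h1 dist_nonneg
    rw [dist_comm] at this
    exact (dist_eq_zero.mp this)
  have hFiso : Isometry F := by
    apply Isometry.of_dist_eq
    intro ξ η
    have hle : ∀ ε : ℝ, 0 < ε → dist (F ξ) (F η) ≤ dist ξ η + ε := by
      intro ε hε
      obtain ⟨k, hk⟩ : ∃ k : ℕ, (4 : ℝ) / (k + 1) < ε := by
        obtain ⟨k, hk⟩ := exists_nat_gt (4 / ε)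
        refine ⟨k, ?_⟩
        rw [div_lt_iff₀ (by positivity)]
        rw [div_lt_iff₀ hε] at hk
        nlinarith
      have h1 := hFdist ξ (av ξ k)
      have h2 := hFdist η (av η k)
      have h3 := hav ξ k
      have h4 := hav η k
      have h5 : dist (q (av ξ k)) (q (av η k)) = dist (p (av ξ k)) (p (av η k)) :=
        (hpq _ _).symm
      have h6 : dist (p (av ξ k)) (p (av η k)) ≤ dist ξ η + 2 / (k + 1) := by
        calc dist (p (av ξ k)) (p (av η k)) ≤ dist (p (av ξ k)) ξ + dist ξ η
            + dist η (p (av η k)) := dist_triangle4 _ _ _ _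
          _ ≤ 1 / (k+1) + dist ξ η + 1 / (k+1) := by
              rw [dist_comm (p (av ξ k)) ξ]
              linarith [h3, h4]
          _ = dist ξ η + 2 / (k+1) := by ring
      calc dist (F ξ) (F η) ≤ dist (F ξ) (q (av ξ k)) + dist (q (av ξ k)) (q (av η k))
          + dist (q (av η k)) (F η) := dist_triangle4 _ _ _ _
        _ ≤ dist (p (av ξ k)) ξ + (dist ξ η + 2 / (k+1)) + dist (p (av η k)) η := by
            rw [dist_comm (F ξ) (q (av ξ k)), h5]
            have h2' : dist (q (av η k)) (F η) ≤ dist (p (av η k)) η := hFdist η (av η k)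
            have h1' : dist (q (av ξ k)) (F ξ) ≤ dist (p (av ξ k)) ξ := hFdist ξ (av ξ k)
            gcongr
        _ ≤ 1/(k+1) + (dist ξ η + 2/(k+1)) + 1/(k+1) := by
            rw [dist_comm (p (av ξ k)) ξ, dist_comm (p (av η k)) η]
            linarith [h3, h4]
        _ = dist ξ η + 4 / (k+1) := by ring
        _ ≤ dist ξ η + ε := by linarith
    have hge : ∀ ε : ℝ, 0 < ε → dist ξ η ≤ dist (F ξ) (F η) + ε := by
      intro ε hε
      obtain ⟨k, hk⟩ : ∃ k : ℕ, (4 : ℝ) / (k + 1) < ε := by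
        obtain ⟨k, hk⟩ := exists_nat_gt (4 / ε)
        refine ⟨k, ?_⟩
        rw [div_lt_iff₀ (by positivity)]
        rw [div_lt_iff₀ hε] at hk
        nlinarith
      have h3 := hav ξ k
      have h4 := hav η k
      calc dist ξ η ≤ dist ξ (p (av ξ k)) + dist (p (av ξ k)) (p (av η k))
          + dist (p (av η k)) η := dist_triangle4 _ _ _ _
        _ ≤ 1/(k+1) + dist (q (av ξ k)) (q (av η k)) + 1/(k+1) := by
            rw [hpq, dist_comm (p (av η k)) η]
            linarith [h3, h4]
        _ ≤ 1/(k+1) + (dist (q (av ξ k)) (F ξ) + dist (F ξ) (F η) + dist (F η) (q (av η k)))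
            + 1/(k+1) := by
            gcongr
            exact dist_triangle4 _ _ _ _
        _ ≤ 1/(k+1) + (dist (p (av ξ k)) ξ + dist (F ξ) (F η) + dist (p (av η k)) η)
            + 1/(k+1) := by
            gcongr
            · exact hFdist ξ _
            · rw [dist_comm (F η)]
              exact hFdist η _
        _ ≤ 1/(k+1) + (1/(k+1) + dist (F ξ) (F η) + 1/(k+1)) + 1/(k+1) := by
            rw [dist_comm (p (av ξ k)) ξ, dist_comm (p (av η k)) η]
            gcongr <;> linarith [h3, h4]
        _ = dist (F ξ) (F η) + 4/(k+1) := by ring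
        _ ≤ dist (F ξ) (F η) + ε := by linarith
    have h1 : dist (F ξ) (F η) ≤ dist ξ η := le_of_forall_pos_le_add (fun ε hε => hle ε hε)
    have h2 : dist ξ η ≤ dist (F ξ) (F η) := le_of_forall_pos_le_add (fun ε hε => hge ε hε)
    exact le_antisymm h1 h2
  have hFrange : Dense (Set.range F) := by
    refine Dense.mono ?_ hE
    rintro _ ⟨k, rfl⟩
    exact ⟨p (2 * k + 1), by rw [hFp, hqE]⟩
  have hFclosed : IsClosed (Set.range F) := hFiso.isClosedEmbedding.isClosed_range
  have hFsurj : Function.Surjective F := by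
    intro y
    have h1 : y ∈ closure (Set.range F) := hFrange y
    rw [hFclosed.closure_eq] at h1
    exact h1
  exact ⟨{ toEquiv := Equiv.ofBijective F ⟨hFiso.injective, hFsurj⟩, isometry_toFun := hFiso }⟩

end FixUry

/-- If `φ` is an isometry of a nonempty complete finitely injective metric space `U`
with totally bounded orbits and a fixed point, then `Fix(φ)` has the approximate
extension property; consequently, if `U` is separable (hence the Urysohn space),
`Fix(φ)` is isometric to `U`. -/
theorem fixed_points_of_totally_bounded_orbit_isometry (U : Type*) [MetricSpace U]
    [Nonempty U] [CompleteSpace U] (hU : FinitelyInjective U) (φ : U ≃ᵢ U)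
    (horb : ∀ z : U, TotallyBounded (Set.range fun n : ℤ => (φ ^ n) z))
    (hfix : ∃ x : U, φ x = x) :
    (∀ (n : ℕ) (x : Fin n → U), (∀ i, φ (x i) = x i) → ∀ f : Fin n → ℝ,
      (∀ i j, |f i - f j| ≤ dist (x i) (x j) ∧ dist (x i) (x j) ≤ f i + f j) →
      ∀ ε > (0 : ℝ), ∃ z : U, φ z = z ∧ ∀ i, |dist z (x i) - f i| ≤ ε) ∧
    (TopologicalSpace.SeparableSpace U →
      Nonempty (({x : U | φ x = x} : Set U) ≃ᵢ U)) := by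
  have horb' : ∀ z : U, TotallyBounded (FixUry.Orb φ z) := horb
  constructor
  · intro n x hx f hf ε hε
    obtain ⟨z, hz1, hz2⟩ := FixUry.exact_realization φ hU horb' hfix n x hx f hf
    refine ⟨z, hz1, fun i => ?_⟩
    rw [hz2 i, sub_self, abs_zero]
    exact le_of_lt hε
  · intro hsep
    exact FixUry.fix_isometric φ hU horb' hfix hsep
end
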